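/- arXiv:2510.11135 — 9 statements merged into one kernel-verified Lean document; each statement's English description precedes it below -/
import Mathlib

section
/- Let b > 0, β ∈ (0,1] and μ < 0, let T_Δ > 0 be the unique critical point of h_μ on (0,∞), and suppose h_0 ∈ ℝ satisfies b < h_0 ≤ h_μ(T_Δ) = T_Δ^β(1 − β − μβT_Δ). Then: if b^{1/β} ≥ T_Δ, the equation h_μ(T) = h_0 has at most two solutions T in [0, b^{1/β}]; while if b^{1/β} < T_Δ, it has no solutions in [0, b^{1/β}]. -/
/-- For `b > 0`, `β ∈ (0,1]`, `μ < 0`, let `T_Δ > 0` be the unique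
critical point of `h_μ(T) = μ(T^β − b)T + T^β` on `(0,∞)` (characterized by
`T_Δ^{β−1}(β + μ(1+β)T_Δ) = μb`), and suppose `b < h₀ ≤ h_μ(T_Δ) = T_Δ^β(1−β−μβT_Δ)`.
If `b^{1/β} ≥ T_Δ`, `h_μ(T) = h₀` has at most two solutions in `[0, b^{1/β}]`;
if `b^{1/β} < T_Δ`, it has none. -/
theorem stmt_2 (b β μ h₀ TΔ : ℝ) (hb : 0 < b) (hβ : β ∈ Set.Ioc (0:ℝ) 1) (hμ : μ < 0)
    (h : ℝ → ℝ) (hdef : ∀ T : ℝ, h T = μ * (T ^ β - b) * T + T ^ β)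
    (hTΔ : 0 < TΔ) (hcrit : deriv h TΔ = 0)
    (huniq : ∀ T > (0:ℝ), deriv h T = 0 → T = TΔ)
    (hchar : TΔ ^ (β - 1) * (β + μ * (1 + β) * TΔ) = μ * b)
    (hval : h TΔ = TΔ ^ β * (1 - β - μ * β * TΔ))
    (hlow : b < h₀) (hhigh : h₀ ≤ TΔ ^ β * (1 - β - μ * β * TΔ)) :
    (b ^ (1/β) ≥ TΔ →
      {T : ℝ | T ∈ Set.Icc (0:ℝ) (b ^ (1/β)) ∧ h T = h₀}.encard ≤ 2) ∧
    (b ^ (1/β) < TΔ → ¬ ∃ T ∈ Set.Icc (0:ℝ) (b ^ (1/β)), h T = h₀) := by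
  obtain ⟨hβ0, hβ1⟩ := hβ
  have hβne : β ≠ 0 := ne_of_gt hβ0
  set R := b ^ (1/β) with hRdef
  have hRpos : 0 < R := Real.rpow_pos_of_pos hb _
  set g : ℝ → ℝ := fun x => μ * ((1 + β) * x ^ β - b) + β * x ^ (β - 1) with hgdef
  -- derivative of h
  have hd : ∀ x : ℝ, 0 < x → HasDerivAt h (g x) x := by
    intro x hx
    have hfun : h = fun T => μ * (T ^ β - b) * T + T ^ β := funext hdef
    have h1 : HasDerivAt (fun T : ℝ => T ^ β) (β * x ^ (β - 1)) x :=
      Real.hasDerivAt_rpow_const (Or.inl hx.ne')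
    have h2 : HasDerivAt (fun T : ℝ => μ * (T ^ β - b) * T + T ^ β)
        ((μ * (β * x ^ (β - 1))) * x + μ * (x ^ β - b) * 1 + β * x ^ (β - 1)) x :=
      ((((h1.sub_const b).const_mul μ).mul (hasDerivAt_id x)).add h1)
    have hxpow : x ^ (β - 1) * x = x ^ β := by
      rw [← Real.rpow_add_one hx.ne' (β - 1), sub_add_cancel]
    rw [hfun]
    convert h2 using 1
    simp only [hgdef]
    linear_combination (-(μ * β)) * hxpow
  -- g is strictly decreasing on (0, ∞)
  have ganti : ∀ x y : ℝ, 0 < x → x < y → g y < g x := by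
    intro x y hx hxy
    have h1 : x ^ β < y ^ β := Real.rpow_lt_rpow hx.le hxy hβ0
    have h2 : y ^ (β - 1) ≤ x ^ (β - 1) :=
      Real.rpow_le_rpow_of_nonpos hx hxy.le (by linarith)
    have hμβ : μ * (1 + β) < 0 := mul_neg_of_neg_of_pos hμ (by linarith)
    simp only [hgdef]
    nlinarith [mul_lt_mul_of_neg_left h1 hμβ, mul_le_mul_of_nonneg_left h2 hβ0.le]
  have hgT : g TΔ = 0 := by rw [← (hd TΔ hTΔ).deriv]; exact hcrit
  have gpos : ∀ x : ℝ, 0 < x → x < TΔ → 0 < g x := fun x hx hlt =>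
    hgT ▸ ganti x TΔ hx hlt
  have gneg : ∀ x : ℝ, TΔ < x → g x < 0 := fun x hlt =>
    hgT ▸ ganti TΔ x hTΔ hlt
  -- continuity of h
  have hcont : Continuous h := by
    have hc : Continuous fun T : ℝ => T ^ β :=
      continuous_iff_continuousAt.2 fun x =>
        Real.continuousAt_rpow_const x β (Or.inr hβ0.le)
    have : Continuous fun T : ℝ => μ * (T ^ β - b) * T + T ^ β :=
      ((continuous_const.mul (hc.sub continuous_const)).mul continuous_id).add hc
    exact (funext hdef : h = _) ▸ this
  -- h strictly increasing on [0, R'] for R' ≤ TΔ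
  have hmono : ∀ R' : ℝ, R' ≤ TΔ → StrictMonoOn h (Set.Icc 0 R') := by
    intro R' hR'
    apply strictMonoOn_of_deriv_pos (convex_Icc 0 R') hcont.continuousOn
    intro x hx
    rw [interior_Icc] at hx
    rw [(hd x hx.1).deriv]
    exact gpos x hx.1 (lt_of_lt_of_le hx.2 hR')
  -- value at R
  have hRb : R ^ β = b := by
    rw [hRdef, ← Real.rpow_mul hb.le, one_div, inv_mul_cancel₀ hβne, Real.rpow_one]
  have hhR : h R = b := by rw [hdef, hRb]; ring
  constructor
  · -- at most two solutions when R ≥ TΔ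
    intro hge
    set S := {T : ℝ | T ∈ Set.Icc (0:ℝ) R ∧ h T = h₀} with hSdef
    have hanti : StrictAntiOn h (Set.Icc TΔ R) := by
      apply strictAntiOn_of_deriv_neg (convex_Icc TΔ R) hcont.continuousOn
      intro x hx
      rw [interior_Icc] at hx
      rw [(hd x (lt_trans hTΔ hx.1)).deriv]
      exact gneg x hx.1
    have hsub : S ⊆ (S ∩ Set.Icc 0 TΔ) ∪ (S ∩ Set.Icc TΔ R) := by
      intro T hT
      rcases le_total T TΔ with hc | hc
      · exact Or.inl ⟨hT, hT.1.1, hc⟩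
      · exact Or.inr ⟨hT, hc, hT.1.2⟩
    have h1 : (S ∩ Set.Icc 0 TΔ).encard ≤ 1 := by
      rw [Set.encard_le_one_iff]
      rintro x y ⟨hxS, hx⟩ ⟨hyS, hy⟩
      exact (hmono TΔ le_rfl).injOn hx hy (hxS.2.trans hyS.2.symm)
    have h2 : (S ∩ Set.Icc TΔ R).encard ≤ 1 := by
      rw [Set.encard_le_one_iff]
      rintro x y ⟨hxS, hx⟩ ⟨hyS, hy⟩
      exact hanti.injOn hx hy (hxS.2.trans hyS.2.symm)
    calc S.encard ≤ ((S ∩ Set.Icc 0 TΔ) ∪ (S ∩ Set.Icc TΔ R)).encard :=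
          Set.encard_mono hsub
      _ ≤ (S ∩ Set.Icc 0 TΔ).encard + (S ∩ Set.Icc TΔ R).encard :=
          Set.encard_union_le _ _
      _ ≤ 1 + 1 := add_le_add h1 h2
      _ = 2 := by norm_num
  · -- no solutions when R < TΔ
    intro hlt
    rintro ⟨T, hT, hhT⟩
    have hle : h T ≤ h R :=
      (hmono R hlt.le).monotoneOn hT ⟨hRpos.le, le_rfl⟩ hT.2
    rw [hhR, hhT] at hle
    linarith
end

section
/- Let b > 0, β ∈ (0,1), and 0 < μ ≤ μ_c where μ_c := ((1/b)·((1−β)/(1+β))^{β−1})^{1/β}. Then h_μ is monotone increasing and nonnegative on [0,∞), and for h_0 ∈ ℝ: (a) if h_0 < 0 the equation h_μ(T) = h_0 has no solutions with T ≥ 0; (b) if h_0 ≥ 0 there is exactly one solution with T ≥ 0, and if moreover h_0 ≤ b this solution lies in [0, b^{1/β}]. -/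
open Real Set

/-- Strict weighted AM-GM for two numbers. -/
lemma amgm_strict {X Y θ : ℝ} (hX : 0 < X) (hY : 0 < Y) (hθ : 0 < θ) (hθ1 : θ < 1)
    (hne : X ≠ Y) : X ^ θ * Y ^ (1 - θ) < θ * X + (1 - θ) * Y := by
  have h1θ : 0 < 1 - θ := by linarith
  have hlog := strictConcaveOn_log_Ioi.2 (Set.mem_Ioi.2 hX) (Set.mem_Ioi.2 hY) hne hθ h1θ
    (by ring)
  simp only [smul_eq_mul] at hlog
  have hpos : 0 < θ * X + (1 - θ) * Y := by positivity
  rw [Real.rpow_def_of_pos hX, Real.rpow_def_of_pos hY, ← Real.exp_add]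
  calc Real.exp (Real.log X * θ + Real.log Y * (1 - θ))
      < Real.exp (Real.log (θ * X + (1 - θ) * Y)) := by
        apply Real.exp_lt_exp.2; linarith
    _ = θ * X + (1 - θ) * Y := Real.exp_log hpos

/-- For `b > 0`, `β ∈ (0,1)` and `0 < μ ≤ μ_c` with
`μ_c = ((1/b)((1−β)/(1+β))^{β−1})^{1/β}`, the function
`h_μ(T) = μ(T^β − b)T + T^β` is monotone increasing and nonnegative on `[0,∞)`;
(a) if `h₀ < 0`, `h_μ(T) = h₀` has no solutions with `T ≥ 0`;
(b) if `h₀ ≥ 0`, it has exactly one solution with `T ≥ 0`, and if moreover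
`h₀ ≤ b` this solution lies in `[0, b^{1/β}]`. -/
theorem stmt_3 (b β μ μc : ℝ) (hb : 0 < b) (hβ : β ∈ Set.Ioo (0:ℝ) 1)
    (hμc : μc = ((1/b) * ((1-β)/(1+β)) ^ (β-1)) ^ (1/β))
    (hμ : 0 < μ) (hμ' : μ ≤ μc)
    (h : ℝ → ℝ) (hdef : ∀ T : ℝ, h T = μ * (T ^ β - b) * T + T ^ β) :
    MonotoneOn h (Set.Ici (0:ℝ)) ∧ (∀ T ≥ (0:ℝ), 0 ≤ h T) ∧
    (∀ h₀ : ℝ, h₀ < 0 → ¬ ∃ T ≥ (0:ℝ), h T = h₀) ∧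
    (∀ h₀ : ℝ, 0 ≤ h₀ →
      (∃! T : ℝ, 0 ≤ T ∧ h T = h₀) ∧
      (h₀ ≤ b → ∀ T : ℝ, 0 ≤ T → h T = h₀ → T ∈ Set.Icc (0:ℝ) (b ^ (1/β)))) := by
  obtain ⟨hβ0, hβ1⟩ := hβ
  have h1β : 0 < 1 - β := by linarith
  have h1β' : 0 < 1 + β := by linarith
  have hh : h = fun T => μ * (T ^ β - b) * T + T ^ β := funext hdef
  -- continuity
  have hcont : Continuous h := by
    rw [hh]
    have hc : Continuous (fun T : ℝ => T ^ β) := Real.continuous_rpow_const hβ0.le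
    exact ((continuous_const.mul (hc.sub continuous_const)).mul continuous_id).add hc
  -- h 0 = 0
  have h0 : h 0 = 0 := by
    rw [hdef 0, Real.zero_rpow hβ0.ne']; ring
  -- the key constant inequality: μ * b ≤ (μ*(1+β)/(1-β))^(1-β)
  have hKey : μ * b ≤ (μ * (1+β) / (1-β)) ^ (1-β) := by
    have hKpos : (0:ℝ) < ((1-β)/(1+β)) ^ (β-1) := Real.rpow_pos_of_pos (by positivity) _
    have hX : (0:ℝ) < (1/b) * ((1-β)/(1+β)) ^ (β-1) := by positivity
    have hμβ : μ ^ β ≤ (1/b) * ((1-β)/(1+β)) ^ (β-1) := by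
      have h1 := Real.rpow_le_rpow hμ.le hμ' hβ0.le
      rwa [hμc, ← Real.rpow_mul hX.le, one_div_mul_cancel hβ0.ne', Real.rpow_one] at h1
    have hKeq : ((1-β)/(1+β)) ^ (β-1) = ((1+β)/(1-β)) ^ (1-β) := by
      rw [show (β - 1 : ℝ) = -(1-β) by ring, Real.rpow_neg (by positivity),
        ← Real.inv_rpow (by positivity), inv_div]
    have h2 : μ ^ β * b ≤ ((1+β)/(1-β)) ^ (1-β) := by
      have h3 := mul_le_mul_of_nonneg_right hμβ hb.le
      rwa [one_div, inv_mul_eq_div, div_mul_eq_mul_div, mul_div_assoc,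
        div_self hb.ne', mul_one, hKeq] at h3
    have hsplit : (μ * (1+β) / (1-β)) ^ (1-β)
        = μ ^ (1-β) * ((1+β)/(1-β)) ^ (1-β) := by
      rw [mul_div_assoc, Real.mul_rpow hμ.le (by positivity)]
    have e1 : μ * b = μ ^ (1-β) * (μ ^ β * b) := by
      rw [← mul_assoc, ← Real.rpow_add hμ, show (1:ℝ)-β+β = 1 by ring, Real.rpow_one]
    rw [e1, hsplit]
    exact mul_le_mul_of_nonneg_left h2 (Real.rpow_nonneg hμ.le _)
  have hT0pos : 0 < (1-β)/(μ*(1+β)) := by positivity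
  -- derivative
  have hderiv : ∀ T : ℝ, 0 < T →
      HasDerivAt h (μ * (β * T ^ (β-1) * T + (T ^ β - b)) + β * T ^ (β-1)) T := by
    intro T hT
    have H1 : HasDerivAt (fun x : ℝ => x ^ β) (β * T ^ (β-1)) T :=
      Real.hasDerivAt_rpow_const (Or.inl hT.ne')
    have H2 : HasDerivAt (fun x : ℝ => μ * (x ^ β - b) * x + x ^ β)
        ((μ * (β * T ^ (β-1))) * T + (μ * (T ^ β - b)) * 1 + β * T ^ (β-1)) T :=
      (((H1.sub_const b).const_mul μ).mul (hasDerivAt_id T)).add H1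
    rw [hh]
    convert H2 using 1
    ring
  -- key strict derivative positivity away from T0
  have hderivpos : ∀ T : ℝ, 0 < T → T ≠ (1-β)/(μ*(1+β)) →
      0 < μ * (β * T ^ (β-1) * T + (T ^ β - b)) + β * T ^ (β-1) := by
    intro T hT hTne
    have hTβ : (0:ℝ) < T ^ β := Real.rpow_pos_of_pos hT _
    have hTβ1 : (0:ℝ) < T ^ (β-1) := Real.rpow_pos_of_pos hT _
    have hmul : T ^ (β-1) * T = T ^ β := by
      nth_rewrite 2 [← Real.rpow_one T]
      rw [← Real.rpow_add hT, show β - 1 + 1 = β by ring]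
    have hXpos : (0:ℝ) < μ * (1+β) * T ^ β / (1-β) := by positivity
    have hne : μ * (1+β) * T ^ β / (1-β) ≠ T ^ (β-1) := by
      intro hXY
      apply hTne
      have h1 : μ * (1+β) * T ^ β = (1-β) * T ^ (β-1) := by
        field_simp at hXY
        linear_combination hXY
      rw [← hmul] at h1
      have h3 : T ^ (β-1) * (μ * (1+β) * T - (1-β)) = 0 := by linear_combination h1
      rcases mul_eq_zero.1 h3 with h4 | h4
      · exact absurd h4 hTβ1.ne'
      · have h5 : μ * (1+β) * T = 1 - β := by linarith
        field_simp
        linear_combination h5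
    have hamgm := amgm_strict hXpos hTβ1 h1β (by linarith) hne
    have hgm : (μ * (1+β) * T ^ β / (1-β)) ^ (1-β) * (T ^ (β-1)) ^ β
        = (μ * (1+β) / (1-β)) ^ (1-β) := by
      rw [show μ * (1+β) * T ^ β / (1-β) = (μ * (1+β) / (1-β)) * T ^ β by ring,
        Real.mul_rpow (by positivity) hTβ.le, ← Real.rpow_mul hT.le, ← Real.rpow_mul hT.le,
        mul_assoc, ← Real.rpow_add hT, show β * (1-β) + (β-1) * β = 0 by ring,
        Real.rpow_zero, mul_one]
    rw [show (1:ℝ) - (1-β) = β by ring] at hamgm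
    rw [hgm] at hamgm
    have hfinal : μ * b < μ * (1+β) * T ^ β + β * T ^ (β-1) := by
      have harith : (1-β) * (μ * (1+β) * T ^ β / (1-β)) + β * T ^ (β-1)
          = μ * (1+β) * T ^ β + β * T ^ (β-1) := by
        field_simp
      calc μ * b ≤ (μ * (1+β) / (1-β)) ^ (1-β) := hKey
        _ < (1-β) * (μ * (1+β) * T ^ β / (1-β)) + β * T ^ (β-1) := hamgm
        _ = μ * (1+β) * T ^ β + β * T ^ (β-1) := harith
    have e : μ * (β * T ^ (β-1) * T + (T ^ β - b)) + β * T ^ (β-1)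
        = μ * (1+β) * T ^ β + β * T ^ (β-1) - μ * b := by
      rw [show β * T ^ (β-1) * T = β * (T ^ (β-1) * T) by ring, hmul]; ring
    rw [e]; linarith
  -- strict monotonicity on pieces
  have hs1 : StrictMonoOn h (Set.Icc 0 ((1-β)/(μ*(1+β)))) := by
    apply strictMonoOn_of_deriv_pos (convex_Icc _ _) hcont.continuousOn
    intro z hz
    rw [interior_Icc] at hz
    rw [(hderiv z hz.1).deriv]
    exact hderivpos z hz.1 (ne_of_lt hz.2)
  have hs2 : StrictMonoOn h (Set.Ici ((1-β)/(μ*(1+β)))) := by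
    apply strictMonoOn_of_deriv_pos (convex_Ici _) hcont.continuousOn
    intro z hz
    rw [interior_Ici] at hz
    rw [(hderiv z (hT0pos.trans hz)).deriv]
    exact hderivpos z (hT0pos.trans hz) (ne_of_gt hz)
  have hstrict : StrictMonoOn h (Set.Ici 0) := by
    intro x hx y hy hxy
    simp only [Set.mem_Ici] at hx hy
    rcases le_total y ((1-β)/(μ*(1+β))) with h1 | h1
    · exact hs1 ⟨hx, (hxy.le.trans h1)⟩ ⟨hy, h1⟩ hxy
    · rcases lt_trichotomy x ((1-β)/(μ*(1+β))) with h2 | h2 | h2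
      · have hxT : h x < h ((1-β)/(μ*(1+β))) :=
          hs1 ⟨hx, h2.le⟩ ⟨hT0pos.le, le_rfl⟩ h2
        have hTy : h ((1-β)/(μ*(1+β))) ≤ h y :=
          hs2.monotoneOn Set.self_mem_Ici h1 h1
        linarith
      · subst h2
        exact hs2 Set.self_mem_Ici h1 hxy
      · exact hs2 h2.le (h2.le.trans hxy.le) hxy
  have hmono : MonotoneOn h (Set.Ici 0) := hstrict.monotoneOn
  have hinj : Set.InjOn h (Set.Ici 0) := hstrict.injOn
  have hnonneg : ∀ T ≥ (0:ℝ), 0 ≤ h T := by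
    intro T hT
    have := hmono Set.self_mem_Ici hT hT
    rwa [h0] at this
  refine ⟨hmono, hnonneg, ?_, ?_⟩
  · rintro h₀ hneg ⟨T, hT, hTeq⟩
    exact absurd (hTeq ▸ hnonneg T hT) (not_le.2 hneg)
  · intro h₀ hh₀
    -- existence
    have hM : ∃ T : ℝ, 0 ≤ T ∧ h T = h₀ := by
      have hmax : 0 < max b h₀ := lt_max_iff.2 (Or.inl hb)
      have hMpos : 0 < (max b h₀) ^ (1/β) := Real.rpow_pos_of_pos hmax _
      have hMβ : ((max b h₀) ^ (1/β)) ^ β = max b h₀ := by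
        rw [← Real.rpow_mul hmax.le, one_div_mul_cancel hβ0.ne', Real.rpow_one]
      have hMval : h₀ ≤ h ((max b h₀) ^ (1/β)) := by
        rw [hdef, hMβ]
        have h1 : 0 ≤ μ * (max b h₀ - b) * ((max b h₀) ^ (1/β)) := by
          apply mul_nonneg (mul_nonneg hμ.le (by simp [le_max_left])) hMpos.le
        have h2 : h₀ ≤ max b h₀ := le_max_right _ _
        linarith
      have hIVT := intermediate_value_Icc hMpos.le hcont.continuousOn
      have hmem : h₀ ∈ Set.Icc (h 0) (h ((max b h₀) ^ (1/β))) := ⟨by rw [h0]; exact hh₀, hMval⟩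
      obtain ⟨T, hTmem, hTeq⟩ := hIVT hmem
      exact ⟨T, hTmem.1, hTeq⟩
    obtain ⟨T, hT0', hTeq⟩ := hM
    constructor
    · refine ⟨T, ⟨hT0', hTeq⟩, ?_⟩
      rintro y ⟨hy0, hyeq⟩
      exact hinj hy0 hT0' (by rw [hyeq, hTeq])
    · intro hb' S hS0 hSeq
      refine ⟨hS0, ?_⟩
      by_contra hgt
      push_neg at hgt
      have hbpos : (0:ℝ) < b ^ (1/β) := Real.rpow_pos_of_pos hb _
      have hSpos : 0 < S := hbpos.trans hgt
      have hSβ : b < S ^ β := by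
        have h1 := Real.rpow_lt_rpow hbpos.le hgt hβ0
        rwa [← Real.rpow_mul hb.le, one_div_mul_cancel hβ0.ne', Real.rpow_one] at h1
      have hlt : b < h S := by
        rw [hdef S]
        have h1 : 0 < μ * (S ^ β - b) * S := by
          apply mul_pos (mul_pos hμ (by linarith)) hSpos
        linarith
      rw [hSeq] at hlt
      linarith
end

section
/- Let b > 0, β ∈ (0,1) and μ > 0, and let g(T) := h_μ'(T) = T^{β−1}(β + μ(1+β)T) − μb on (0,∞). Then g attains a strict global minimum on (0,∞) at T_⋆ := (1−β)/(μ(1+β)), and the minimum value is g(T_⋆) = ((1−β)/(μ(1+β)))^{β−1} − μb = μb((μ_c/μ)^β − 1), where μ_c := ((1/b)·((1−β)/(1+β))^{β−1})^{1/β}. -/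
open Real

lemma key_amgm (β t : ℝ) (hβ0 : 0 < β) (hβ1 : β < 1) (ht : 0 < t) (hne : t ≠ 1) :
    1 < β * t ^ (β-1) + (1-β) * t ^ β := by
  have hlog : Real.log t ≠ 0 := by
    intro h
    obtain h | h | h := Real.log_eq_zero.1 h
    · exact ht.ne' h
    · exact hne h
    · linarith
  have hxy : (β-1) * Real.log t ≠ β * Real.log t := by
    intro h
    exact hlog (by linear_combination -h)
  have hconv := strictConvexOn_exp.2 (Set.mem_univ ((β-1) * Real.log t))
    (Set.mem_univ (β * Real.log t)) hxy hβ0 (by linarith : (0:ℝ) < 1 - β) (by ring)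
  simp only [smul_eq_mul] at hconv
  have hzero : β * ((β-1) * Real.log t) + (1-β) * (β * Real.log t) = 0 := by ring
  rw [hzero, Real.exp_zero] at hconv
  rw [Real.rpow_def_of_pos ht, Real.rpow_def_of_pos ht]
  calc (1:ℝ) < β * Real.exp ((β-1) * Real.log t) + (1-β) * Real.exp (β * Real.log t) := hconv
    _ = β * Real.exp (Real.log t * (β-1)) + (1-β) * Real.exp (Real.log t * β) := by
        ring_nf

/-- For `b > 0`, `β ∈ (0,1)`, `μ > 0` and
`g(T) = h_μ'(T) = T^{β−1}(β + μ(1+β)T) − μb` on `(0,∞)`, `g` attains a strict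
global minimum at `T_⋆ = (1−β)/(μ(1+β))`, and the minimum value is
`g(T_⋆) = ((1−β)/(μ(1+β)))^{β−1} − μb = μb((μ_c/μ)^β − 1)`. -/
theorem stmt_4 (b β μ μc Tstar : ℝ) (hb : 0 < b) (hβ : β ∈ Set.Ioo (0:ℝ) 1)
    (hμ : 0 < μ)
    (g : ℝ → ℝ) (hg : ∀ T : ℝ, g T = T ^ (β-1) * (β + μ*(1+β)*T) - μ*b)
    (hT : Tstar = (1-β)/(μ*(1+β)))
    (hμc : μc = ((1/b) * ((1-β)/(1+β)) ^ (β-1)) ^ (1/β)) :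
    (∀ T > (0:ℝ), T ≠ Tstar → g Tstar < g T) ∧
    g Tstar = ((1-β)/(μ*(1+β))) ^ (β-1) - μ*b ∧
    g Tstar = μ*b*((μc/μ) ^ β - 1) := by
  obtain ⟨hβ0, hβ1⟩ := hβ
  have h1β : 0 < 1 - β := by linarith
  set c := μ*(1+β) with hc
  have hcpos : 0 < c := by positivity
  have hTpos : 0 < Tstar := by rw [hT]; positivity
  have hcT : c * Tstar = 1 - β := by
    rw [hT]; field_simp
  have hgT : ∀ x : ℝ, 0 < x → g x = β * x^(β-1) + c * x^β - μ*b := by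
    intro x hx
    rw [hg]
    have hxb : x ^ β = x ^ (β-1) * x := by
      rw [← Real.rpow_add_one hx.ne' (β-1)]; norm_num
    rw [hxb]; ring
  -- value at Tstar
  have hval : g Tstar = Tstar ^ (β-1) - μ*b := by
    have hTb : Tstar ^ β = Tstar ^ (β-1) * Tstar := by
      rw [← Real.rpow_add_one hTpos.ne' (β-1)]; norm_num
    rw [hgT Tstar hTpos, hTb]
    have : c * (Tstar ^ (β-1) * Tstar) = (c * Tstar) * Tstar ^ (β-1) := by ring
    rw [this, hcT]; ring
  have hval2 : g Tstar = ((1-β)/(μ*(1+β))) ^ (β-1) - μ*b := by rw [hval, hT]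
  refine ⟨?_, hval2, ?_⟩
  · intro T hTp hne
    set t := T / Tstar with ht
    have htpos : 0 < t := by positivity
    have htne : t ≠ 1 := by
      intro h
      rw [ht, div_eq_one_iff_eq hTpos.ne'] at h
      exact hne h
    have hTeq : T = t * Tstar := by rw [ht]; exact (div_mul_cancel₀ T hTpos.ne').symm
    have hkey := key_amgm β t hβ0 hβ1 htpos htne
    have e1 : T ^ (β-1) = t ^ (β-1) * Tstar ^ (β-1) := by
      rw [hTeq, Real.mul_rpow htpos.le hTpos.le]
    have e2 : T ^ β = t ^ β * Tstar ^ β := by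
      rw [hTeq, Real.mul_rpow htpos.le hTpos.le]
    have e3 : Tstar ^ β = Tstar ^ (β-1) * Tstar := by
      rw [← Real.rpow_add_one hTpos.ne' (β-1)]; norm_num
    have hTsp : 0 < Tstar ^ (β-1) := Real.rpow_pos_of_pos hTpos _
    rw [hgT T hTp, hval, e1, e2, e3]
    have hfin : β * (t ^ (β-1) * Tstar ^ (β-1)) + c * (t ^ β * (Tstar ^ (β-1) * Tstar))
        = Tstar ^ (β-1) * (β * t ^ (β-1) + (1-β) * t ^ β) := by
      have : c * (t ^ β * (Tstar ^ (β-1) * Tstar)) = (c * Tstar) * (t ^ β * Tstar ^ (β-1)) := by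
        ring
      rw [this, hcT]; ring
    rw [hfin]
    nlinarith [mul_lt_mul_of_pos_left hkey hTsp]
  · -- third identity
    set r : ℝ := (1-β)/(1+β) with hrdef
    have hr : (0:ℝ) < r := by positivity
    have hXpos : (0:ℝ) < (1/b) * r ^ (β-1) := by positivity
    have hμcb : μc ^ β = (1/b) * r ^ (β-1) := by
      rw [hμc, ← Real.rpow_mul hXpos.le]
      rw [one_div_mul_cancel (by linarith : β ≠ 0), Real.rpow_one]
    have hμcpos : 0 < μc := by rw [hμc]; exact Real.rpow_pos_of_pos hXpos _
    have hdiv : (μc/μ) ^ β = μc ^ β / μ ^ β := Real.div_rpow hμcpos.le hμ.le β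
    have h1 : ((1-β)/(μ*(1+β))) = r / μ := by rw [hrdef, div_div, mul_comm]
    have h2 : (r/μ) ^ (β-1) = r ^ (β-1) / μ ^ (β-1) := Real.div_rpow hr.le hμ.le (β-1)
    have hPQ : μ ^ (β-1) * μ = μ ^ β := by
      rw [← Real.rpow_add_one hμ.ne' (β-1)]; norm_num
    have hP : 0 < μ ^ (β-1) := Real.rpow_pos_of_pos hμ _
    have hQ : 0 < μ ^ β := Real.rpow_pos_of_pos hμ _
    rw [hval2, h1, h2, hdiv, hμcb]
    field_simp
    linear_combination (-(r ^ (β-1))) * hPQ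
end

section
/- Let b > 0, β ∈ (0,1) and μ > μ_c, where μ_c := ((1/b)·((1−β)/(1+β))^{β−1})^{1/β}. Then the derivative h_μ'(T) = T^{β−1}(β + μ(1+β)T) − μb has exactly two zeros T_L, T_R on (0,∞), satisfying 0 < T_L < T_⋆ < T_R where T_⋆ := (1−β)/(μ(1+β)); moreover T_R^β < b/(1+β), so that 0 < T_L < T_R < b^{1/β}. -/
open Real Set

/-- For `b > 0`, `β ∈ (0,1)` and `μ > μ_c`, the derivative
`h_μ'(T) = T^{β−1}(β + μ(1+β)T) − μb` has exactly two zeros `T_L < T_R` on `(0,∞)`,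
with `0 < T_L < T_⋆ < T_R` where `T_⋆ = (1−β)/(μ(1+β))`; moreover
`T_R^β < b/(1+β)`, so `0 < T_L < T_R < b^{1/β}`. -/
theorem stmt_5 (b β μ μc : ℝ) (hb : 0 < b) (hβ : β ∈ Set.Ioo (0:ℝ) 1)
    (hμc : μc = ((1/b) * ((1-β)/(1+β)) ^ (β-1)) ^ (1/β)) (hμ : μc < μ)
    (g : ℝ → ℝ) (hg : ∀ T : ℝ, g T = T ^ (β-1) * (β + μ*(1+β)*T) - μ*b) :
    ∃ TL TR : ℝ, 0 < TL ∧ TL < (1-β)/(μ*(1+β)) ∧ (1-β)/(μ*(1+β)) < TR ∧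
      g TL = 0 ∧ g TR = 0 ∧ (∀ T > (0:ℝ), g T = 0 → T = TL ∨ T = TR) ∧
      TR ^ β < b/(1+β) ∧ TR < b ^ (1/β) := by
  obtain ⟨hβ0, hβ1⟩ := hβ
  have h1β : (0:ℝ) < 1 - β := by linarith
  have h1β' : (0:ℝ) < 1 + β := by linarith
  set C : ℝ := ((1-β)/(1+β)) ^ (β-1) with hC
  have hCpos : 0 < C := rpow_pos_of_pos (by positivity) _
  have hμcpos : 0 < μc := by rw [hμc]; positivity
  have hμ0 : 0 < μ := hμcpos.trans hμ
  set Ts : ℝ := (1-β)/(μ*(1+β)) with hTs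
  have hTspos : 0 < Ts := by positivity
  -- key inequality : C < μ^β * b
  have hkey : C < μ ^ β * b := by
    have h1 : μc ^ β = (1/b) * C := by
      rw [hμc, ← Real.rpow_mul (by positivity), one_div_mul_cancel hβ0.ne', Real.rpow_one]
    have h2 : (1/b) * C < μ ^ β := by
      rw [← h1]; exact Real.rpow_lt_rpow hμcpos.le hμ hβ0
    have h3 : C = (1/b) * C * b := by field_simp
    nlinarith [mul_lt_mul_of_pos_right h2 hb]
  -- Ts ^ (β-1) < μ * b
  have hTsb : Ts ^ (β-1) < μ * b := by
    have hTs' : Ts = ((1-β)/(1+β)) / μ := by rw [hTs, div_div, mul_comm]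
    have hval : Ts ^ (β-1) = C * μ ^ (1-β) := by
      rw [hTs', Real.div_rpow (by positivity) hμ0.le, ← hC, div_eq_mul_inv,
        ← Real.rpow_neg hμ0.le, neg_sub]
    have hmul : μ ^ (1-β) * μ ^ β = μ := by
      rw [← Real.rpow_add hμ0, sub_add_cancel, Real.rpow_one]
    have h4 := mul_lt_mul_of_pos_right hkey (Real.rpow_pos_of_pos hμ0 (1-β))
    have h5 : μ ^ β * b * μ ^ (1-β) = μ * b := by linear_combination b * hmul
    rw [hval]; nlinarith [h4, h5]
  -- the auxiliary function
  set f : ℝ → ℝ := fun T => β * T ^ (β-1) + μ*(1+β)*T ^ β - μ*b with hf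
  have hgf : ∀ T : ℝ, 0 < T → g T = f T := by
    intro T hT
    have hTT : T ^ β = T ^ (β-1) * T := by
      rw [show β = (β-1)+1 by ring, Real.rpow_add_one hT.ne']; ring_nf
    rw [hg, hf]; dsimp only; rw [hTT]; ring
  -- value at Ts
  have hTsβ : Ts ^ β = Ts ^ (β-1) * Ts := by
    rw [show β = (β-1)+1 by ring, Real.rpow_add_one hTspos.ne']; ring_nf
  have hmt : μ*(1+β)*Ts = 1-β := by rw [hTs]; field_simp
  have hfTs : f Ts = Ts ^ (β-1) - μ*b := by
    rw [hf]; dsimp only; rw [hTsβ]; linear_combination Ts ^ (β-1) * hmt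
  have hfTsneg : f Ts < 0 := by rw [hfTs]; linarith
  -- derivative
  have hderiv : ∀ T : ℝ, 0 < T →
      HasDerivAt f (β*((β-1)*T^(β-1-1)) + μ*(1+β)*(β*T^(β-1))) T := by
    intro T hT
    have h1 := (Real.hasDerivAt_rpow_const (p := β-1) (Or.inl hT.ne')).const_mul β
    have h2 := (Real.hasDerivAt_rpow_const (p := β) (Or.inl hT.ne')).const_mul (μ*(1+β))
    have := (h1.add h2).sub_const (μ*b)
    rw [hf]; exact this
  have hrw : ∀ T : ℝ, 0 < T → T ^ (β-1) = T ^ (β-1-1) * T := by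
    intro T hT
    rw [show β-1 = (β-1-1)+1 by ring, Real.rpow_add_one hT.ne']; ring_nf
  -- strict antitonicity on Ioc 0 Ts
  have hanti : StrictAntiOn f (Ioc 0 Ts) := by
    apply strictAntiOn_of_deriv_neg (convex_Ioc 0 Ts)
    · exact fun x hx => ((hderiv x hx.1).continuousAt).continuousWithinAt
    · rw [interior_Ioc]
      intro x hx
      rw [(hderiv x hx.1).deriv]
      have hlt : μ*(1+β)*x < 1-β := by
        have := mul_lt_mul_of_pos_left hx.2 (show (0:ℝ) < μ*(1+β) by positivity)
        linarith [hmt]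
      have heq : β*((β-1)*x^(β-1-1)) + μ*(1+β)*(β*x^(β-1))
          = β * x^(β-1-1) * ((β-1) + μ*(1+β)*x) := by rw [hrw x hx.1]; ring
      rw [heq]
      exact mul_neg_of_pos_of_neg (mul_pos hβ0 (Real.rpow_pos_of_pos hx.1 _))
        (by linarith)
  -- strict monotonicity on Ici Ts
  have hmono : StrictMonoOn f (Ici Ts) := by
    apply strictMonoOn_of_deriv_pos (convex_Ici Ts)
    · exact fun x hx => ((hderiv x (hTspos.trans_le hx)).continuousAt).continuousWithinAt
    · rw [interior_Ici]
      intro x hx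
      have hx0 : 0 < x := hTspos.trans hx
      rw [(hderiv x hx0).deriv]
      have hlt : 1-β < μ*(1+β)*x := by
        have := mul_lt_mul_of_pos_left hx (show (0:ℝ) < μ*(1+β) by positivity)
        linarith [hmt]
      have heq : β*((β-1)*x^(β-1-1)) + μ*(1+β)*(β*x^(β-1))
          = β * x^(β-1-1) * ((β-1) + μ*(1+β)*x) := by rw [hrw x hx0]; ring
      rw [heq]
      exact mul_pos (by positivity) (by linarith)
  -- left endpoint with positive value
  set K : ℝ := μ*b/β + 1 with hK
  have hKpos : 0 < K := by positivity
  set a0 : ℝ := K ^ (1/(β-1)) with ha0def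
  have ha0 : 0 < a0 := Real.rpow_pos_of_pos hKpos _
  set a : ℝ := min a0 (Ts/2) with ha
  have hapos : 0 < a := lt_min ha0 (by positivity)
  have haTs : a < Ts := (min_le_right _ _).trans_lt (by linarith)
  have hfa : 0 < f a := by
    have h1 : a0 ^ (β-1) ≤ a ^ (β-1) :=
      Real.rpow_le_rpow_of_nonpos hapos (min_le_left _ _) (by linarith)
    have h2 : a0 ^ (β-1) = K := by
      rw [ha0def, ← Real.rpow_mul hKpos.le,
        one_div_mul_cancel (sub_ne_zero.mpr hβ1.ne), Real.rpow_one]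
    have h3 : μ*b/β + 1 ≤ a ^ (β-1) := by rw [← hK, ← h2]; exact h1
    have h4 : μ*b + β ≤ β * a ^ (β-1) := by
      have := mul_le_mul_of_nonneg_left h3 hβ0.le
      have hβne : β ≠ 0 := hβ0.ne'
      field_simp at this
      nlinarith [this]
    have h5 : 0 < μ*(1+β)*a ^ β := by positivity
    rw [hf]; dsimp only; linarith
  -- right endpoint with positive value
  set c : ℝ := max (Ts+1) ((b/(1+β)) ^ (1/β) + 1) with hc
  have hcTs : Ts < c := lt_of_lt_of_le (by linarith) (le_max_left _ _)
  have hc0 : 0 < c := hTspos.trans hcTs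
  have hcb : b/(1+β) < c ^ β := by
    have h1 : (b/(1+β)) ^ (1/β) < c :=
      lt_of_lt_of_le (by linarith) (le_max_right _ _)
    have h2 := Real.rpow_lt_rpow (Real.rpow_nonneg (by positivity) _) h1 hβ0
    rwa [← Real.rpow_mul (by positivity), one_div_mul_cancel hβ0.ne',
      Real.rpow_one] at h2
  have hfc : 0 < f c := by
    have h1 : μ*(1+β)*(b/(1+β)) < μ*(1+β)*c ^ β :=
      mul_lt_mul_of_pos_left hcb (by positivity)
    have h2 : μ*(1+β)*(b/(1+β)) = μ*b := by field_simp
    have h3 : 0 < β * c ^ (β-1) := by positivity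
    rw [hf]; dsimp only; linarith
  -- intermediate value theorem applications
  have hcontL : ContinuousOn f (Icc a Ts) :=
    fun x hx => ((hderiv x (hapos.trans_le hx.1)).continuousAt).continuousWithinAt
  have hcontR : ContinuousOn f (Icc Ts c) :=
    fun x hx => ((hderiv x (hTspos.trans_le hx.1)).continuousAt).continuousWithinAt
  obtain ⟨TL, hTLmem, hfTL⟩ :=
    intermediate_value_Ioo' haTs.le hcontL (Set.mem_Ioo.mpr ⟨hfTsneg, hfa⟩)
  obtain ⟨TR, hTRmem, hfTR⟩ :=
    intermediate_value_Ioo hcTs.le hcontR (Set.mem_Ioo.mpr ⟨hfTsneg, hfc⟩)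
  have hTL0 : 0 < TL := hapos.trans hTLmem.1
  have hTLTs : TL < Ts := hTLmem.2
  have hTsTR : Ts < TR := hTRmem.1
  have hTR0 : 0 < TR := hTspos.trans hTsTR
  refine ⟨TL, TR, hTL0, hTLTs, hTsTR, ?_, ?_, ?_, ?_, ?_⟩
  · rw [hgf TL hTL0]; exact hfTL
  · rw [hgf TR hTR0]; exact hfTR
  · -- uniqueness
    intro T hT hgT
    have hfT : f T = 0 := by rw [← hgf T hT]; exact hgT
    rcases lt_trichotomy T Ts with h | h | h
    · left
      exact hanti.injOn ⟨hT, h.le⟩ ⟨hTL0, hTLTs.le⟩ (hfT.trans hfTL.symm)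
    · exfalso; rw [h] at hfT; linarith
    · right
      exact hmono.injOn h.le hTsTR.le (hfT.trans hfTR.symm)
  · -- TR ^ β < b/(1+β)
    have hfTR' : β * TR ^ (β-1) + μ*(1+β)*TR ^ β - μ*b = 0 := by
      rw [hf] at hfTR; exact hfTR
    have h1 : 0 < β * TR ^ (β-1) := by positivity
    have h2 : μ * ((1+β)*TR ^ β) < μ * b := by rw [← mul_assoc]; linarith
    have h3 : (1+β)*TR ^ β < b := lt_of_mul_lt_mul_left h2 hμ0.le
    rw [lt_div_iff₀ h1β']; linarith
  · -- TR < b ^ (1/β)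
    have hTRb : TR ^ β < b/(1+β) := by
      have hfTR' : β * TR ^ (β-1) + μ*(1+β)*TR ^ β - μ*b = 0 := by
        rw [hf] at hfTR; exact hfTR
      have h1 : 0 < β * TR ^ (β-1) := by positivity
      have h2 : μ * ((1+β)*TR ^ β) < μ * b := by rw [← mul_assoc]; linarith
      have h3 : (1+β)*TR ^ β < b := lt_of_mul_lt_mul_left h2 hμ0.le
      rw [lt_div_iff₀ h1β']; linarith
    have hbb : TR ^ β < b := by
      have : b/(1+β) < b := div_lt_self hb (by linarith)
      linarith
    have h4 := Real.rpow_lt_rpow (Real.rpow_nonneg hTR0.le β) hbb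
      (by positivity : (0:ℝ) < 1/β)
    rwa [← Real.rpow_mul hTR0.le, mul_one_div, div_self hβ0.ne',
      Real.rpow_one] at h4
end

section
/- Let b, β ∈ (0,1). Then there exists a unique pair (T̂, μ̂) with T̂ ∈ (0, b^{1/β}) and μ̂ > μ_c solving the system h_{μ̂}(T̂) = 0 and h_{μ̂}'(T̂) = 0, and it is given explicitly by T̂ = ((1−β)b)^{1/β} and μ̂ = 1/(β·(b(1−β)^{1−β})^{1/β}). -/
lemma aux_amgm {β : ℝ} (h0 : 0 < β) (h1 : β < 1) :
    β ^ β * (1+β) ^ (1-β) < 1 := by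
  have h1β : (0:ℝ) < 1 + β := by linarith
  have hkey := strictConcaveOn_log_Ioi.2 (Set.mem_Ioi.2 h0) (Set.mem_Ioi.2 h1β)
      (by linarith : β ≠ 1 + β) h0 (by linarith : (0:ℝ) < 1 - β) (by ring)
  simp only [smul_eq_mul] at hkey
  have hone : β * β + (1-β) * (1+β) = 1 := by ring
  rw [hone, Real.log_one] at hkey
  rw [Real.rpow_def_of_pos h0, Real.rpow_def_of_pos h1β, ← Real.exp_add]
  rw [Real.exp_lt_one_iff]
  nlinarith [hkey]

lemma aux_mu {b β : ℝ} (hb0 : 0 < b) (hβ0 : 0 < β) (hβ1 : β < 1) :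
    ((1/b) * ((1-β)/(1+β)) ^ (β-1)) ^ (1/β)
      < 1/(β * (b*(1-β) ^ (1-β)) ^ (1/β)) := by
  have h1mβ : (0:ℝ) < 1 - β := by linarith
  have h1pβ : (0:ℝ) < 1 + β := by linarith
  set D : ℝ := ((1/b) * (1-β) ^ (β-1)) ^ (1/β) with hD
  have hDpos : 0 < D := Real.rpow_pos_of_pos (by positivity) _
  set E : ℝ := ((1+β) ^ (1-β)) ^ (1/β) with hE
  have hEpos : 0 < E := Real.rpow_pos_of_pos (Real.rpow_pos_of_pos h1pβ _) _
  -- μc = D * E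
  have hdecomp : ((1-β)/(1+β)) ^ (β-1) = (1-β) ^ (β-1) * (1+β) ^ (1-β) := by
    rw [Real.div_rpow h1mβ.le h1pβ.le, show β - 1 = -(1-β) by ring,
      Real.rpow_neg h1pβ.le, div_inv_eq_mul]
  have hmuc : ((1/b) * ((1-β)/(1+β)) ^ (β-1)) ^ (1/β) = D * E := by
    rw [hdecomp, ← mul_assoc, Real.mul_rpow (by positivity) (by positivity)]
  -- (b*(1-β)^(1-β))^(1/β) = 1/D
  have hpow : (1-β) ^ (1-β) * (1-β) ^ (β-1) = 1 := by
    rw [← Real.rpow_add h1mβ]; norm_num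
  have hinner : (b*(1-β) ^ (1-β)) * ((1/b)*(1-β) ^ (β-1)) = 1 := by
    have h : (b*(1-β) ^ (1-β)) * ((1/b)*(1-β) ^ (β-1))
        = ((1-β) ^ (1-β) * (1-β) ^ (β-1)) * (b/b) := by ring
    rw [h, div_self hb0.ne', mul_one, hpow]
  have hprodD : (b*(1-β) ^ (1-β)) ^ (1/β) * D = 1 := by
    rw [hD, ← Real.mul_rpow (by positivity) (by positivity), hinner, Real.one_rpow]
  have hBD : (b*(1-β) ^ (1-β)) ^ (1/β) = 1/D := by
    field_simp
    linarith [hprodD]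
  -- β * E < 1
  have hbe : β * E < 1 := by
    have h := Real.rpow_lt_one (by positivity) (aux_amgm hβ0 hβ1) (by positivity : 0 < 1/β)
    rw [Real.mul_rpow (by positivity) (by positivity), one_div,
      Real.rpow_rpow_inv hβ0.le hβ0.ne', ← one_div] at h
    exact h
  rw [hmuc, hBD]
  have hgoal : 1/(β * (1/D)) = D * (1/β) := by
    field_simp
  rw [hgoal]
  have hE' : E < 1/β := by
    rw [lt_div_iff₀ hβ0]; linarith [hbe]
  exact (mul_lt_mul_iff_right₀ hDpos).2 hE'


/-- For `b, β ∈ (0,1)` there is a unique pair `(T̂, μ̂)` with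
`T̂ ∈ (0, b^{1/β})` and `μ̂ > μ_c` solving `h_{μ̂}(T̂) = 0` and `h_{μ̂}'(T̂) = 0`,
and it is given by `T̂ = ((1−β)b)^{1/β}`, `μ̂ = 1/(β(b(1−β)^{1−β})^{1/β})`. -/
theorem stmt_6 (b β μc : ℝ) (hb : b ∈ Set.Ioo (0:ℝ) 1) (hβ : β ∈ Set.Ioo (0:ℝ) 1)
    (hμc : μc = ((1/b) * ((1-β)/(1+β)) ^ (β-1)) ^ (1/β)) :
    ∀ p : ℝ × ℝ,
      (p.1 ∈ Set.Ioo (0:ℝ) (b ^ (1/β)) ∧ μc < p.2 ∧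
        p.2 * (p.1 ^ β - b) * p.1 + p.1 ^ β = 0 ∧
        p.1 ^ (β-1) * (β + p.2*(1+β)*p.1) - p.2*b = 0)
      ↔ p = (((1-β)*b) ^ (1/β), 1/(β * (b*(1-β) ^ (1-β)) ^ (1/β))) := by
  obtain ⟨hb0, hb1⟩ := hb
  obtain ⟨hβ0, hβ1⟩ := hβ
  have h1mβ : (0:ℝ) < 1 - β := by linarith
  have hβne : β ≠ 0 := hβ0.ne'
  have hT0' : (0:ℝ) < (1-β)*b := by positivity
  have hThat : (0:ℝ) < ((1-β)*b) ^ (1/β) := Real.rpow_pos_of_pos hT0' _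
  have hMain : (b*(1-β) ^ (1-β)) ^ (1/β) = ((1-β)*b) ^ (1/β) / (1-β) := by
    have h1 : b*(1-β) ^ ((1:ℝ)-β) = ((1-β)*b) / (1-β)^β := by
      rw [Real.rpow_sub h1mβ, Real.rpow_one]; field_simp
    rw [h1, Real.div_rpow hT0'.le (by positivity),
        ← Real.rpow_mul h1mβ.le, mul_one_div, div_self hβne, Real.rpow_one]
  have hμhat : 1/(β * (b*(1-β) ^ (1-β)) ^ (1/β)) = (1-β)/(β * ((1-β)*b) ^ (1/β)) := by
    rw [hMain]; field_simp
  intro p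
  constructor
  · rintro ⟨⟨hT0, hTb⟩, hμcp, hE1, hE2⟩
    have hTne : p.1 ≠ 0 := hT0.ne'
    have hA0 : 0 < p.1 ^ β := Real.rpow_pos_of_pos hT0 _
    have hE2' : β * p.1 ^ β + p.2*(1+β)*(p.1 ^ β*p.1) - p.2*b*p.1 = 0 := by
      have h := hE2
      rw [Real.rpow_sub hT0, Real.rpow_one] at h
      field_simp at h
      linear_combination h
    have key1 : (β - 1)*p.1 ^ β + p.2*β*(p.1 ^ β*p.1) = 0 := by
      linear_combination hE2' - hE1
    have key2 : p.2*(β*p.1) = 1 - β := by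
      have h : p.1 ^ β * ((β-1) + p.2*(β*p.1)) = 0 := by linear_combination key1
      rcases mul_eq_zero.1 h with h'|h'
      · exact absurd h' hA0.ne'
      · linarith
    have hA : p.1 ^ β = (1-β)*b := by
      linear_combination β*hE1 + (b - p.1 ^ β)*key2
    have hT : p.1 = ((1-β)*b) ^ (1/β) := by
      rw [← hA, one_div, Real.rpow_rpow_inv hT0.le hβne]
    have hμ : p.2 = (1-β)/(β*p.1) := by
      rw [eq_div_iff (by positivity : β*p.1 ≠ 0)]
      linear_combination key2
    rw [Prod.ext_iff]
    refine ⟨hT, ?_⟩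
    rw [hμhat, hμ, hT]
  · rintro rfl
    dsimp only
    have hA2 : (((1-β)*b) ^ (1/β)) ^ β = (1-β)*b := by
      rw [one_div]; exact Real.rpow_inv_rpow hT0'.le hβne
    refine ⟨Set.mem_Ioo.2 ⟨hThat, ?_⟩, ?_, ?_, ?_⟩
    · exact Real.rpow_lt_rpow hT0'.le (by nlinarith) (by positivity)
    · rw [hμc]; exact aux_mu hb0 hβ0 hβ1
    · rw [hA2, hμhat]
      field_simp
      ring
    · rw [Real.rpow_sub hThat, Real.rpow_one, hA2, hμhat]
      field_simp
      ring
end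

section
/- Let b, β ∈ (0,1), and set T̂ := ((1−β)b)^{1/β} and μ̂ := 1/(β·(b(1−β)^{1−β})^{1/β}). Writing h(T,μ) := μ(T^β − b)T + T^β, one has ∂²h/∂T²(T̂,μ̂) = b/(b(1−β)^{1−β})^{2/β} > 0 and ∂h/∂μ(T̂,μ̂) = −βbT̂ < 0; consequently there exist ε > 0 and μ₋ < μ̂ < μ₊ such that for every μ ∈ (μ₋, μ̂) the function T ↦ h(T,μ) has no zeros in (T̂−ε, T̂+ε), while for every μ ∈ (μ̂, μ₊) it has exactly two zeros in (T̂−ε, T̂+ε) (a fold/saddle-node bifurcation at (T̂, μ̂)). -/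
open Set Real Filter

private lemma d1' (b β μ T : ℝ) (hT : 0 < T) :
    HasDerivAt (fun T : ℝ => μ * (T ^ β - b) * T + T ^ β)
      (μ * ((1+β) * T ^ β - b) + β * T ^ (β-1)) T := by
  have hr : HasDerivAt (fun T : ℝ => T ^ β) (β * T ^ (β-1)) T :=
    Real.hasDerivAt_rpow_const (Or.inl hT.ne')
  have h1 : HasDerivAt (fun T : ℝ => μ * (T ^ β - b) * T)
      ((μ * (β * T ^ (β-1))) * T + (μ * (T ^ β - b)) * 1) T :=
    (((hr.sub_const b).const_mul μ).mul (hasDerivAt_id T))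
  have := h1.add hr
  refine this.congr_deriv ?_
  have key : T ^ (β-1) * T = T ^ β := by
    rw [← Real.rpow_add_one hT.ne' (β-1)]; ring_nf
  linear_combination (μ*β) * key

private lemma d2' (b β μ T : ℝ) (hT : 0 < T) :
    HasDerivAt (fun T : ℝ => μ * ((1+β) * T ^ β - b) + β * T ^ (β-1))
      (μ * ((1+β) * (β * T ^ (β-1))) + β * ((β-1) * T ^ (β-2))) T := by
  have hr1 : HasDerivAt (fun T : ℝ => T ^ β) (β * T ^ (β-1)) T :=
    Real.hasDerivAt_rpow_const (Or.inl hT.ne')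
  have hr2 : HasDerivAt (fun T : ℝ => T ^ (β-1)) ((β-1) * T ^ (β-2)) T := by
    have := Real.hasDerivAt_rpow_const (x := T) (p := β-1) (Or.inl hT.ne')
    convert this using 2
    ring
  exact (((hr1.const_mul (1+β)).sub_const b).const_mul μ).add (hr2.const_mul β)

private lemma gd' (b β T : ℝ) (hT : 0 < T) (hne : b - T ^ β ≠ 0) :
    HasDerivAt (fun T : ℝ => T ^ (β-1) / (b - T ^ β))
      ((T ^ (β-2) * (T ^ β - (1-β)*b)) / (b - T ^ β) ^ 2) T := by
  have hr1 : HasDerivAt (fun T : ℝ => T ^ β) (β * T ^ (β-1)) T :=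
    Real.hasDerivAt_rpow_const (Or.inl hT.ne')
  have hr2 : HasDerivAt (fun T : ℝ => T ^ (β-1)) ((β-1) * T ^ (β-2)) T := by
    have := Real.hasDerivAt_rpow_const (x := T) (p := β-1) (Or.inl hT.ne')
    convert this using 2
    ring
  have hden : HasDerivAt (fun T : ℝ => b - T ^ β) (-(β * T ^ (β-1))) T := hr1.const_sub b
  have := hr2.div hden hne
  refine this.congr_deriv ?_
  have key : T ^ (β-1) * T ^ (β-1) = T ^ (β-2) * T ^ β := by
    rw [← Real.rpow_add hT, ← Real.rpow_add hT]; ring_nf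
  congr 1
  linear_combination β * key

set_option maxHeartbeats 1000000 in
/-- For `b, β ∈ (0,1)`, `T̂ = ((1−β)b)^{1/β}`,
`μ̂ = 1/(β(b(1−β)^{1−β})^{1/β})` and `h(T,μ) = μ(T^β − b)T + T^β`, one has
`∂²h/∂T²(T̂,μ̂) = b/(b(1−β)^{1−β})^{2/β} > 0` and `∂h/∂μ(T̂,μ̂) = −βbT̂ < 0`;
consequently there exist `ε > 0` and `μ₋ < μ̂ < μ₊` such that for `μ ∈ (μ₋, μ̂)`
the map `T ↦ h(T,μ)` has no zeros in `(T̂−ε, T̂+ε)`, while for `μ ∈ (μ̂, μ₊)` it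
has exactly two zeros there (fold bifurcation at `(T̂, μ̂)`). -/
theorem stmt_7 (b β That μhat : ℝ) (hb : b ∈ Set.Ioo (0:ℝ) 1)
    (hβ : β ∈ Set.Ioo (0:ℝ) 1)
    (h : ℝ → ℝ → ℝ) (hdef : ∀ T μ : ℝ, h T μ = μ * (T ^ β - b) * T + T ^ β)
    (hT : That = ((1-β)*b) ^ (1/β))
    (hμ : μhat = 1/(β * (b*(1-β) ^ (1-β)) ^ (1/β))) :
    deriv (deriv (fun T => h T μhat)) That = b / (b*(1-β) ^ (1-β)) ^ (2/β) ∧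
    0 < b / (b*(1-β) ^ (1-β)) ^ (2/β) ∧
    deriv (fun μ => h That μ) μhat = -β*b*That ∧
    -β*b*That < 0 ∧
    ∃ ε > (0:ℝ), ∃ μm μp : ℝ, μm < μhat ∧ μhat < μp ∧
      (∀ μ ∈ Set.Ioo μm μhat, ∀ T ∈ Set.Ioo (That-ε) (That+ε), h T μ ≠ 0) ∧
      (∀ μ ∈ Set.Ioo μhat μp,
        {T : ℝ | T ∈ Set.Ioo (That-ε) (That+ε) ∧ h T μ = 0}.encard = 2) := by
  obtain ⟨hb0, hb1⟩ := hb
  obtain ⟨hβ0, hβ1⟩ := hβ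
  have h1β : (0:ℝ) < 1 - β := by linarith
  have hβne : β ≠ 0 := ne_of_gt hβ0
  have hbb : (0:ℝ) < (1-β)*b := by positivity
  have hT0 : 0 < That := by rw [hT]; exact Real.rpow_pos_of_pos hbb _
  have hTne : That ≠ 0 := ne_of_gt hT0
  have hTβ : That ^ β = (1-β)*b := by
    rw [hT, ← Real.rpow_mul hbb.le, one_div, inv_mul_cancel₀ hβne, Real.rpow_one]
  have hβb : (0:ℝ) < (1-β) ^ β := Real.rpow_pos_of_pos h1β β
  have hA : b*(1-β) ^ (1-β) = (That/(1-β)) ^ β := by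
    rw [Real.div_rpow hT0.le h1β.le, hTβ, eq_div_iff (ne_of_gt hβb),
      mul_assoc, ← Real.rpow_add h1β, show (1-β)+β = (1:ℝ) by ring, Real.rpow_one]
    ring
  have hA0 : (0:ℝ) ≤ That/(1-β) := by positivity
  have hA1 : (b*(1-β) ^ (1-β)) ^ (1/β) = That/(1-β) := by
    rw [hA, ← Real.rpow_mul hA0, mul_one_div, div_self hβne, Real.rpow_one]
  have hA2 : (b*(1-β) ^ (1-β)) ^ (2/β) = (That/(1-β)) ^ (2:ℕ) := by
    rw [hA, ← Real.rpow_mul hA0, show β * (2/β) = (2:ℝ) by field_simp,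
      show ((2:ℝ)) = ((2:ℕ):ℝ) by norm_num, Real.rpow_natCast]
  have hμ' : μhat = (1-β)/(β*That) := by
    rw [hμ, hA1]
    field_simp
  -- rpow at That, shifted exponents
  have e1 : That ^ (β-1) = (1-β)*b/That := by
    rw [Real.rpow_sub_one hTne, hTβ]
  have e2 : That ^ (β-2) = (1-β)*b/That ^ (2:ℕ) := by
    rw [show β-(2:ℝ) = β-1-1 by ring, Real.rpow_sub_one hTne, e1]
    ring
  -- second derivative in T
  have hfun : (fun T => h T μhat) = fun T => μhat * (T ^ β - b) * T + T ^ β :=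
    funext fun T => hdef T μhat
  have hder1 : deriv (fun T : ℝ => μhat * (T ^ β - b) * T + T ^ β) =ᶠ[nhds That]
      (fun T : ℝ => μhat * ((1+β) * T ^ β - b) + β * T ^ (β-1)) := by
    filter_upwards [Ioi_mem_nhds hT0] with T hTp
    exact (d1' b β μhat T hTp).deriv
  have hsecond : deriv (deriv (fun T => h T μhat)) That =
      μhat * ((1+β) * (β * That ^ (β-1))) + β * ((β-1) * That ^ (β-2)) := by
    rw [hfun, hder1.deriv_eq, (d2' b β μhat That hT0).deriv]
  have hsval : deriv (deriv (fun T => h T μhat)) That = b / (b*(1-β) ^ (1-β)) ^ (2/β) := by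
    rw [hsecond, hA2, hμ', e1, e2]
    field_simp
    ring
  have hspos : 0 < b / (b*(1-β) ^ (1-β)) ^ (2/β) :=
    div_pos hb0 (Real.rpow_pos_of_pos (by positivity) _)
  -- derivative in μ
  have hdm : (fun μ => h That μ) = fun μ => (That ^ β - b)*That * μ + That ^ β :=
    funext fun μ => by rw [hdef]; ring
  have hμder : deriv (fun μ => h That μ) μhat = -β*b*That := by
    have hD : HasDerivAt (fun μ : ℝ => (That ^ β - b)*That * μ + That ^ β)
        ((That ^ β - b)*That) μhat := by
      simpa using ((hasDerivAt_id μhat).const_mul ((That ^ β - b)*That)).add_const (That ^ β)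
    rw [hdm, hD.deriv, hTβ]
    ring
  have hμneg : -β*b*That < 0 := by
    have := mul_pos (mul_pos hβ0 hb0) hT0
    linarith
  refine ⟨hsval, hspos, hμder, hμneg, ?_⟩
  -- ============ fold bifurcation ============
  set Tb : ℝ := b ^ (1/β) with hTbdef
  have hTb0 : 0 < Tb := Real.rpow_pos_of_pos hb0 _
  have hTbβ : Tb ^ β = b := by
    rw [hTbdef, ← Real.rpow_mul hb0.le, one_div, inv_mul_cancel₀ hβne, Real.rpow_one]
  have hTlt : That < Tb := by
    rw [hT, hTbdef]
    exact Real.rpow_lt_rpow hbb.le (by nlinarith) (by positivity)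
  set ε : ℝ := min That (Tb - That) / 2 with hεdef
  have hεm : 0 < min That (Tb - That) := lt_min hT0 (sub_pos.2 hTlt)
  have hε0 : 0 < ε := by rw [hεdef]; linarith
  have hlo : 0 < That - ε := by
    have := min_le_left That (Tb - That); rw [hεdef]; linarith
  have hhi : That + ε < Tb := by
    have := min_le_right That (Tb - That); rw [hεdef]; linarith
  have hIcc : ∀ T ∈ Icc (That-ε) (That+ε), 0 < T ∧ T ^ β < b := by
    intro T hTm
    obtain ⟨h1, h2⟩ := hTm
    have hTp : 0 < T := lt_of_lt_of_le hlo h1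
    refine ⟨hTp, ?_⟩
    calc T ^ β < Tb ^ β := Real.rpow_lt_rpow hTp.le (by linarith) hβ0
    _ = b := hTbβ
  set g : ℝ → ℝ := fun T => T ^ (β-1) / (b - T ^ β) with hgdef
  have hfact : ∀ T, 0 < T → T ^ β < b → ∀ μ, h T μ = (b - T ^ β) * T * (g T - μ) := by
    intro T hTp hTb' μ
    have hdne : b - T ^ β ≠ 0 := ne_of_gt (sub_pos.2 hTb')
    have hk : T ^ (β-1) * T = T ^ β := by
      rw [← Real.rpow_add_one hTp.ne' (β-1)]; ring_nf
    rw [hdef, hgdef]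
    field_simp
    linear_combination (-1) * hk
  have hgd : ∀ T, 0 < T → T ^ β < b →
      HasDerivAt g ((T ^ (β-2) * (T ^ β - (1-β)*b)) / (b - T ^ β) ^ 2) T := by
    intro T hTp hTb'
    exact gd' b β T hTp (ne_of_gt (sub_pos.2 hTb'))
  have hcont : ContinuousOn g (Icc (That-ε) (That+ε)) := by
    intro T hTm
    obtain ⟨hTp, hTb'⟩ := hIcc T hTm
    exact ((hgd T hTp hTb').continuousAt).continuousWithinAt
  have hsubL : Icc (That-ε) That ⊆ Icc (That-ε) (That+ε) :=
    Icc_subset_Icc le_rfl (by linarith)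
  have hsubR : Icc That (That+ε) ⊆ Icc (That-ε) (That+ε) :=
    Icc_subset_Icc (by linarith) le_rfl
  have hanti : StrictAntiOn g (Icc (That-ε) That) := by
    apply strictAntiOn_of_deriv_neg (convex_Icc _ _) (hcont.mono hsubL)
    intro T hTm
    rw [interior_Icc] at hTm
    have hTm' : T ∈ Icc (That-ε) (That+ε) := ⟨hTm.1.le, by linarith [hTm.2]⟩
    obtain ⟨hTp, hTb'⟩ := hIcc T hTm'
    rw [(hgd T hTp hTb').deriv]
    apply div_neg_of_neg_of_pos
    · apply mul_neg_of_pos_of_neg (Real.rpow_pos_of_pos hTp _)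
      have : T ^ β < That ^ β := Real.rpow_lt_rpow hTp.le hTm.2 hβ0
      rw [hTβ] at this; linarith
    · exact pow_pos (sub_pos.2 hTb') 2
  have hmono : StrictMonoOn g (Icc That (That+ε)) := by
    apply strictMonoOn_of_deriv_pos (convex_Icc _ _) (hcont.mono hsubR)
    intro T hTm
    rw [interior_Icc] at hTm
    have hTm' : T ∈ Icc (That-ε) (That+ε) := ⟨by linarith [hTm.1], hTm.2.le⟩
    obtain ⟨hTp, hTb'⟩ := hIcc T hTm'
    rw [(hgd T hTp hTb').deriv]
    apply div_pos
    · apply mul_pos (Real.rpow_pos_of_pos hTp _)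
      have : That ^ β < T ^ β := Real.rpow_lt_rpow hT0.le hTm.1 hβ0
      rw [hTβ] at this; linarith
    · exact pow_pos (sub_pos.2 hTb') 2
  have hgT : g That = μhat := by
    rw [hgdef]
    simp only
    rw [e1, hTβ, hμ', show b - (1-β)*b = β*b by ring, div_div,
      div_eq_div_iff (by positivity) (by positivity)]
    ring
  have hTmemL : That ∈ Icc (That-ε) That := ⟨by linarith, le_rfl⟩
  have hTmemR : That ∈ Icc That (That+ε) := ⟨le_rfl, by linarith⟩
  have hLmem : That - ε ∈ Icc (That-ε) That := ⟨le_rfl, by linarith⟩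
  have hRmem : That + ε ∈ Icc That (That+ε) := ⟨by linarith, le_rfl⟩
  have hgL : μhat < g (That-ε) := by
    have := hanti hLmem hTmemL (by linarith)
    rw [hgT] at this; exact this
  have hgR : μhat < g (That+ε) := by
    have := hmono hTmemR hRmem (by linarith)
    rw [hgT] at this; exact this
  have hmin : ∀ T ∈ Icc (That-ε) (That+ε), μhat ≤ g T := by
    intro T hTm
    rcases le_total T That with hle | hle
    · have hTmL : T ∈ Icc (That-ε) That := ⟨hTm.1, hle⟩
      rcases eq_or_lt_of_le hle with rfl | hlt
      · rw [hgT]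
      · have := hanti hTmL hTmemL hlt
        rw [hgT] at this; linarith
    · have hTmR : T ∈ Icc That (That+ε) := ⟨hle, hTm.2⟩
      rcases eq_or_lt_of_le hle with heq | hlt
      · rw [← heq, hgT]
      · have := hmono hTmemR hTmR hlt
        rw [hgT] at this; linarith
  refine ⟨ε, hε0, μhat - 1, min (g (That-ε)) (g (That+ε)), by linarith,
    lt_min hgL hgR, ?_, ?_⟩
  · -- no zeros for μ < μhat
    intro μ hμm T hTm h0
    obtain ⟨hTp, hTb'⟩ := hIcc T (Ioo_subset_Icc_self hTm)
    have := hfact T hTp hTb' μ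
    rw [h0] at this
    have hne1 : (b - T ^ β) * T ≠ 0 :=
      mul_ne_zero (ne_of_gt (sub_pos.2 hTb')) hTp.ne'
    have hgμ : g T = μ := by
      rcases mul_eq_zero.1 this.symm with hc | hc
      · exact absurd hc hne1
      · linarith
    have := hmin T (Ioo_subset_Icc_self hTm)
    rw [hgμ] at this
    exact absurd hμm.2 (not_lt.2 this)
  · -- exactly two zeros for μhat < μ < μp
    intro μ hμm
    have hμ1 : g That < μ := by rw [hgT]; exact hμm.1
    have hμ2 : μ < g (That-ε) := lt_of_lt_of_le hμm.2 (min_le_left _ _)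
    have hμ3 : μ < g (That+ε) := lt_of_lt_of_le hμm.2 (min_le_right _ _)
    obtain ⟨T1, hT1m, hT1e⟩ :=
      intermediate_value_Ioo' (by linarith : That - ε ≤ That) (hcont.mono hsubL)
        (⟨hμ1, hμ2⟩ : μ ∈ Ioo (g That) (g (That-ε)))
    obtain ⟨T2, hT2m, hT2e⟩ :=
      intermediate_value_Ioo (by linarith : That ≤ That + ε) (hcont.mono hsubR)
        (⟨hμ1, hμ3⟩ : μ ∈ Ioo (g That) (g (That+ε)))
    have hT1big : T1 ∈ Ioo (That-ε) (That+ε) := ⟨hT1m.1, by linarith [hT1m.2]⟩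
    have hT2big : T2 ∈ Ioo (That-ε) (That+ε) := ⟨by linarith [hT2m.1], hT2m.2⟩
    have hzero : ∀ T ∈ Ioo (That-ε) (That+ε), (h T μ = 0 ↔ g T = μ) := by
      intro T hTm
      obtain ⟨hTp, hTb'⟩ := hIcc T (Ioo_subset_Icc_self hTm)
      have hne1 : (b - T ^ β) * T ≠ 0 :=
        mul_ne_zero (ne_of_gt (sub_pos.2 hTb')) hTp.ne'
      rw [hfact T hTp hTb' μ]
      constructor
      · intro h0
        rcases mul_eq_zero.1 h0 with hc | hc
        · exact absurd hc hne1
        · linarith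
      · intro h0; rw [h0]; ring
    have hset : {T : ℝ | T ∈ Set.Ioo (That-ε) (That+ε) ∧ h T μ = 0} = {T1, T2} := by
      ext T
      simp only [mem_setOf_eq, mem_insert_iff, mem_singleton_iff]
      constructor
      · rintro ⟨hTm, h0⟩
        have hgμ : g T = μ := (hzero T hTm).1 h0
        rcases lt_trichotomy T That with hlt | heq | hgt
        · left
          exact hanti.injOn ⟨hTm.1.le, hlt.le⟩ ⟨hT1m.1.le, hT1m.2.le⟩ (hgμ.trans hT1e.symm)
        · exfalso; rw [heq, hgT] at hgμ; linarith [hμm.1]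
        · right
          exact hmono.injOn ⟨hgt.le, hTm.2.le⟩ ⟨hT2m.1.le, hT2m.2.le⟩ (hgμ.trans hT2e.symm)
      · rintro (rfl | rfl)
        · exact ⟨hT1big, (hzero T hT1big).2 hT1e⟩
        · exact ⟨hT2big, (hzero T hT2big).2 hT2e⟩
    rw [hset]
    exact Set.encard_pair (by intro hc; rw [hc] at hT1m; linarith [hT1m.2, hT2m.1])
end

section
/- For every β ∈ (0,1) and every b > 0, one has μ_c < μ_bif, where μ_c := ((1/b)·((1−β)/(1+β))^{β−1})^{1/β} and μ_bif := 1/(β·(b(1−β)^{1−β})^{1/β}); equivalently, (1−β)^{(1−β)/β} > β/(1+β) for all β ∈ (0,1). -/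
open Real

/-- `x * log x ≥ -exp (-1)` for `0 < x`. -/
lemma aux_mul_log_ge (x : ℝ) (hx : 0 < x) : -Real.exp (-1) ≤ x * Real.log x := by
  have hxi : 0 < x⁻¹ := inv_pos.2 hx
  have h1 : Real.log (x⁻¹ * Real.exp (-1)) ≤ x⁻¹ * Real.exp (-1) - 1 :=
    Real.log_le_sub_one_of_pos (by positivity)
  rw [Real.log_mul (ne_of_gt hxi) (Real.exp_ne_zero _), Real.log_exp,
    Real.log_inv] at h1
  have h2 : -Real.log x ≤ x⁻¹ * Real.exp (-1) := by linarith
  have h3 : x * (-Real.log x) ≤ x * (x⁻¹ * Real.exp (-1)) :=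
    mul_le_mul_of_nonneg_left h2 hx.le
  rw [mul_inv_cancel_left₀ (ne_of_gt hx)] at h3
  linarith

/-- Key inequality 2: `(1-β) log (1-β) + β (log (1+β) - log β) > 0`. -/
lemma aux_key2 (β : ℝ) (hβ0 : 0 < β) (hβ1 : β < 1) :
    0 < (1 - β) * Real.log (1 - β) + β * (Real.log (1 + β) - Real.log β) := by
  have ht : 0 < 1 - β := by linarith
  have h1b : 0 < 1 + β := by linarith
  have hlog : Real.log (1 + β) - Real.log β = Real.log ((1 + β) / β) := by
    rw [Real.log_div (ne_of_gt h1b) (ne_of_gt hβ0)]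
  rw [hlog]
  rcases le_or_gt β 0.55 with hc | hc
  · -- small β case: (1+β)/β ≥ 31/11 > e
    have hrat : Real.exp 1 < (1 + β) / β := by
      have h31 : (31 : ℝ) / 11 ≤ (1 + β) / β := by
        rw [div_le_div_iff₀ (by norm_num) hβ0]; nlinarith
      have := Real.exp_one_lt_d9
      linarith
    have hL : 1 < Real.log ((1 + β) / β) :=
      (Real.lt_log_iff_exp_lt (by positivity)).mpr hrat
    have hlb : -β ≤ (1 - β) * Real.log (1 - β) := by
      have h6 := Real.one_sub_inv_le_log_of_pos ht
      have h4 : (1 - β) * (1 - (1 - β)⁻¹) ≤ (1 - β) * Real.log (1 - β) :=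
        mul_le_mul_of_nonneg_left h6 ht.le
      have h5 : (1 - β) * (1 - (1 - β)⁻¹) = -β := by
        field_simp
        ring
      linarith
    nlinarith
  · -- large β case
    have hlb : -Real.exp (-1) ≤ (1 - β) * Real.log (1 - β) := aux_mul_log_ge _ ht
    have hrat : (2 : ℝ) < (1 + β) / β := by
      rw [lt_div_iff₀ hβ0]; nlinarith
    have hL : Real.log 2 < Real.log ((1 + β) / β) := Real.log_lt_log (by norm_num) hrat
    have hmul : 0.55 * Real.log 2 < β * Real.log ((1 + β) / β) := by
      have h2pos : (0:ℝ) < Real.log 2 := Real.log_pos (by norm_num)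
      nlinarith
    have he := Real.exp_neg_one_lt_d9
    have hl2 := Real.log_two_gt_d9
    nlinarith

/-- Key inequality 1: `β log β + (1-β) log (1+β) < 0`. -/
lemma aux_key1 (β : ℝ) (hβ0 : 0 < β) (hβ1 : β < 1) :
    β * Real.log β + (1 - β) * Real.log (1 + β) < 0 := by
  have h1 : Real.log (1 + β) < β := by
    have := Real.log_lt_sub_one_of_pos (show (0:ℝ) < 1 + β by linarith)
      (by intro h; nlinarith [h])
    linarith
  have h2 : Real.log β ≤ β - 1 := Real.log_le_sub_one_of_pos hβ0
  nlinarith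

/-- For every `β ∈ (0,1)` and `b > 0`, `μ_c < μ_bif`, where
`μ_c = ((1/b)((1−β)/(1+β))^{β−1})^{1/β}` and `μ_bif = 1/(β(b(1−β)^{1−β})^{1/β})`;
equivalently `(1−β)^{(1−β)/β} > β/(1+β)`. -/
theorem stmt_8 (b β : ℝ) (hb : 0 < b) (hβ : β ∈ Set.Ioo (0:ℝ) 1) :
    ((1/b) * ((1-β)/(1+β)) ^ (β-1)) ^ (1/β) < 1/(β * (b*(1-β) ^ (1-β)) ^ (1/β)) ∧
    (1-β) ^ ((1-β)/β) > β/(1+β) := by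
  obtain ⟨hβ0, hβ1⟩ := hβ
  have ht : 0 < 1 - β := by linarith
  have h1b : (0:ℝ) < 1 + β := by linarith
  constructor
  · -- first part
    have hA : (0:ℝ) < (1/b) * ((1-β)/(1+β)) ^ (β-1) := by positivity
    have hB : (0:ℝ) < b * (1-β) ^ (1-β) := by positivity
    rw [lt_div_iff₀ (by positivity)]
    have hmul : ((1/b) * ((1-β)/(1+β)) ^ (β-1)) ^ (1/β) * ((b*(1-β) ^ (1-β)) ^ (1/β))
        = (((1/b) * ((1-β)/(1+β)) ^ (β-1)) * (b*(1-β) ^ (1-β))) ^ (1/β) :=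
      (Real.mul_rpow hA.le hB.le).symm
    have d1 : ((1-β)/(1+β)) ^ (β-1) = (1-β) ^ (β-1) * (1+β) ^ (1-β) := by
      rw [Real.div_rpow ht.le h1b.le, div_eq_mul_inv, ← Real.rpow_neg h1b.le, neg_sub]
    have d2 : (1-β) ^ (β-1) * (1-β) ^ (1-β) = 1 := by
      rw [← Real.rpow_add ht, show β-1+(1-β) = 0 by ring, Real.rpow_zero]
    have hsimp : ((1/b) * ((1-β)/(1+β)) ^ (β-1)) * (b*(1-β) ^ (1-β))
        = (1+β) ^ (1-β) := by
      calc ((1/b) * ((1-β)/(1+β)) ^ (β-1)) * (b*(1-β) ^ (1-β))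
          = ((1/b)*b) * ((1-β) ^ (β-1) * (1-β) ^ (1-β)) * (1+β) ^ (1-β) := by
            rw [d1]; ring
        _ = (1+β) ^ (1-β) := by
            rw [d2, one_div, inv_mul_cancel₀ (ne_of_gt hb)]; ring
    have key : β * ((1+β) ^ ((1-β)/β)) < 1 := by
      have hpos : (0:ℝ) < β * ((1+β) ^ ((1-β)/β)) := by positivity
      have hlog : Real.log (β * ((1+β) ^ ((1-β)/β))) < 0 := by
        rw [Real.log_mul (ne_of_gt hβ0) (ne_of_gt (Real.rpow_pos_of_pos h1b _)),
          Real.log_rpow h1b]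
        have hk := aux_key1 β hβ0 hβ1
        have hfield : β * (Real.log β + (1-β)/β * Real.log (1+β))
            = β * Real.log β + (1-β) * Real.log (1+β) := by
          field_simp
        nlinarith
      exact (Real.log_neg_iff hpos).mp hlog
    calc ((1/b) * ((1-β)/(1+β)) ^ (β-1)) ^ (1/β) * (β * (b*(1-β) ^ (1-β)) ^ (1/β))
        = β * ((((1/b) * ((1-β)/(1+β)) ^ (β-1)) ^ (1/β)) * ((b*(1-β) ^ (1-β)) ^ (1/β))) := by
          ring
      _ = β * ((1+β) ^ ((1-β)/β)) := by
          rw [hmul, hsimp, ← Real.rpow_mul h1b.le]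
          ring_nf
      _ < 1 := key
  · -- second part
    rw [gt_iff_lt]
    apply (Real.log_lt_log_iff (div_pos hβ0 h1b) (Real.rpow_pos_of_pos ht _)).mp
    rw [Real.log_rpow ht, Real.log_div (ne_of_gt hβ0) (ne_of_gt h1b)]
    have hk := aux_key2 β hβ0 hβ1
    have hfield : β * ((1-β)/β * Real.log (1-β))
        = (1-β) * Real.log (1-β) := by
      field_simp
    nlinarith
end

section
/- Let β, b ∈ (0,1), σ > 0, and suppose b ≤ σ and μ ≤ μ_c, where μ_c := ((1/b)·((1−β)/(1+β))^{β−1})^{1/β}. Then the equation μ(T^β − b)T + T^β = b − σ has no solutions T in (0, b^{1/β}]. -/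
/-- Scalar inequality: `β^β * (1+β)^(1-β) < 1` for `β ∈ (0,1)`. -/
lemma aux_scalar (β : ℝ) (h0 : 0 < β) (h1 : β < 1) :
    β ^ β * (1 + β) ^ (1 - β) < 1 := by
  have h1β : (0:ℝ) < 1 + β := by linarith
  have e1 : β ^ β = Real.exp (β * Real.log β) := by
    rw [Real.rpow_def_of_pos h0, mul_comm]
  have e2 : (1 + β) ^ (1 - β) = Real.exp ((1 - β) * Real.log (1 + β)) := by
    rw [Real.rpow_def_of_pos h1β, mul_comm]
  rw [e1, e2, ← Real.exp_add]
  have hlogβ : Real.log β < β - 1 := Real.log_lt_sub_one_of_pos h0 (by linarith)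
  have hlog1β : Real.log (1 + β) ≤ (1 + β) - 1 := Real.log_le_sub_one_of_pos h1β
  have : β * Real.log β + (1 - β) * Real.log (1 + β) < 0 := by
    have h2 : β * Real.log β < β * (β - 1) := by
      exact (mul_lt_mul_iff_right₀ h0).mpr hlogβ
    have h3 : (1 - β) * Real.log (1 + β) ≤ (1 - β) * β := by
      have := hlog1β; nlinarith
    nlinarith
  calc Real.exp (β * Real.log β + (1 - β) * Real.log (1 + β)) < Real.exp 0 :=
        Real.exp_lt_exp.mpr this
    _ = 1 := Real.exp_zero

/-- Key: for `0 < T` with `T^β ≤ b`, `μ_c * (T * (b - T^β)) < T^β`. -/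
lemma aux_key (b β : ℝ) (hb0 : 0 < b) (hβ0 : 0 < β) (hβ1 : β < 1)
    (T : ℝ) (hT : 0 < T) (hxb : T ^ β ≤ b) :
    ((1/b) * ((1-β)/(1+β)) ^ (β-1)) ^ (1/β) * (T * (b - T ^ β)) < T ^ β := by
  set x := T ^ β with hx
  have hx0 : 0 < x := Real.rpow_pos_of_pos hT β
  have h1β : (0:ℝ) < 1 - β := by linarith
  have h1β' : (0:ℝ) < 1 + β := by linarith
  have hβne : β ≠ 0 := ne_of_gt hβ0
  -- AM-GM
  set u := x / (b * (1 - β)) with hu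
  set v := (b - x) / (b * β) with hv
  have hu0 : 0 ≤ u := by positivity
  have hv0 : 0 ≤ v := by
    apply div_nonneg (by linarith) (by positivity)
  have hamgm : u ^ (1-β) * v ^ β ≤ 1 := by
    have := Real.geom_mean_le_arith_mean2_weighted h1β.le hβ0.le hu0 hv0
      (by ring : (1-β) + β = 1)
    have hrhs : (1-β) * u + β * v = 1 := by
      rw [hu, hv]
      field_simp
      ring
    linarith [this, hrhs.le]
  -- raise to power 1/β : u^((1-β)/β) * v ≤ 1
  have hstep : u ^ ((1-β)/β) * v ≤ 1 := by
    have h := Real.rpow_le_rpow (by positivity) hamgm (le_of_lt (by positivity : (0:ℝ) < 1/β))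
    rw [Real.one_rpow, Real.mul_rpow (by positivity) (by positivity),
      ← Real.rpow_mul hu0, ← Real.rpow_mul hv0] at h
    rw [show (1-β) * (1/β) = (1-β)/β by ring] at h
    rw [show β * (1/β) = 1 by field_simp] at h
    rwa [Real.rpow_one] at h
  -- translate: T * (b - x) ≤ M * x with M = b*β*(b*(1-β))^((1-β)/β)
  set M := b * β * (b * (1-β)) ^ ((1-β)/β) with hM
  have hM0 : 0 < M := by positivity
  have hTx : T = x ^ (1/β) := by
    rw [hx, ← Real.rpow_mul hT.le, mul_one_div, div_self hβne, Real.rpow_one]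
  have hux : u ^ ((1-β)/β) = x ^ ((1-β)/β) / (b * (1-β)) ^ ((1-β)/β) := by
    rw [hu, Real.div_rpow hx0.le (by positivity)]
  have hxpow : x ^ ((1-β)/β) * x = x ^ (1/β) := by
    rw [show x ^ ((1-β)/β) * x = x ^ ((1-β)/β) * x ^ (1:ℝ) by rw [Real.rpow_one],
      ← Real.rpow_add hx0]
    congr 1
    field_simp
    ring
  have hbound : T * (b - x) ≤ M * x := by
    have h2 : x ^ ((1-β)/β) / (b * (1-β)) ^ ((1-β)/β) * ((b - x) / (b * β)) ≤ 1 := by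
      rw [← hux]; exact hstep
    have h3 : x ^ ((1-β)/β) * (b - x) ≤ (b * (1-β)) ^ ((1-β)/β) * (b * β) := by
      have hd1 : (0:ℝ) < (b * (1-β)) ^ ((1-β)/β) := by positivity
      have hd2 : (0:ℝ) < b * β := by positivity
      rw [div_mul_div_comm, div_le_one (by positivity)] at h2
      linarith [h2]
    have : T * (b - x) = x ^ ((1-β)/β) * (b - x) * x := by
      rw [hTx, ← hxpow]; ring
    rw [this]
    calc x ^ ((1-β)/β) * (b - x) * x ≤ (b * (1-β)) ^ ((1-β)/β) * (b * β) * x := by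
          apply mul_le_mul_of_nonneg_right h3 hx0.le
      _ = M * x := by rw [hM]; ring
  -- μ_c * M < 1
  set μc := ((1/b) * ((1-β)/(1+β)) ^ (β-1)) ^ (1/β) with hμc
  have hμc0 : 0 < μc := by
    apply Real.rpow_pos_of_pos
    positivity
  have hμcM : μc * M < 1 := by
    have hAMβ : (1/b) * ((1-β)/(1+β)) ^ (β-1) * M ^ β = β ^ β * (1 + β) ^ (1 - β) := by
      rw [hM, Real.mul_rpow (by positivity) (by positivity),
        ← Real.rpow_mul (by positivity : (0:ℝ) ≤ b * (1-β)),
        div_mul_cancel₀ _ hβne,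
        Real.mul_rpow hb0.le hβ0.le,
        Real.mul_rpow hb0.le h1β.le,
        Real.div_rpow h1β.le h1β'.le]
      have hbb : b ^ β * b ^ (1-β) = b := by
        rw [← Real.rpow_add hb0]; norm_num
      have h1b : (1-β) ^ (β-1) * (1-β) ^ (1-β) = 1 := by
        rw [← Real.rpow_add h1β]; norm_num
      have h1β'' : ((1+β) ^ (β-1) : ℝ)⁻¹ = (1+β) ^ (1-β) := by
        rw [← Real.rpow_neg h1β'.le]; norm_num
      have binv : (b:ℝ)⁻¹ * b = 1 := inv_mul_cancel₀ hb0.ne'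
      rw [one_div, div_eq_mul_inv, h1β'']
      linear_combination
        (b⁻¹ * (1-β)^(β-1) * (1+β)^(1-β) * β^β * (1-β)^(1-β)) * hbb +
        ((1-β)^(β-1) * (1+β)^(1-β) * β^β * (1-β)^(1-β)) * binv +
        ((1+β)^(1-β) * β^β) * h1b
    have hM' : M = (M ^ β) ^ (1/β) := by
      rw [← Real.rpow_mul hM0.le, mul_one_div, div_self hβne, Real.rpow_one]
    have habc : ((1/b) * ((1-β)/(1+β)) ^ (β-1) * M ^ β) ^ (1/β) = μc * M := by
      rw [Real.mul_rpow (by positivity) (by positivity), ← hM', hμc]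
    rw [← habc, hAMβ]
    exact Real.rpow_lt_one (by positivity) (aux_scalar β hβ0 hβ1) (by positivity)
  -- combine
  calc μc * (T * (b - x)) ≤ μc * (M * x) := by
        apply mul_le_mul_of_nonneg_left hbound hμc0.le
    _ = (μc * M) * x := by ring
    _ < 1 * x := by exact mul_lt_mul_of_pos_right hμcM hx0
    _ = x := one_mul x

/-- For `β, b ∈ (0,1)`, `σ > 0` with `b ≤ σ` and
`μ ≤ μ_c = ((1/b)((1−β)/(1+β))^{β−1})^{1/β}`, the equation
`μ(T^β − b)T + T^β = b − σ` has no solutions `T ∈ (0, b^{1/β}]`. -/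
theorem stmt_9 (b β σ μ : ℝ) (hb : b ∈ Set.Ioo (0:ℝ) 1) (hβ : β ∈ Set.Ioo (0:ℝ) 1)
    (hσ : 0 < σ) (hbσ : b ≤ σ)
    (hμ : μ ≤ ((1/b) * ((1-β)/(1+β)) ^ (β-1)) ^ (1/β)) :
    ¬ ∃ T ∈ Set.Ioc (0:ℝ) (b ^ (1/β)), μ*(T ^ β - b)*T + T ^ β = b - σ := by
  obtain ⟨hb0, hb1⟩ := hb
  obtain ⟨hβ0, hβ1⟩ := hβ
  rintro ⟨T, ⟨hT0, hTle⟩, heq⟩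
  have hβne : β ≠ 0 := ne_of_gt hβ0
  have hTβpos : 0 < T ^ β := Real.rpow_pos_of_pos hT0 β
  have hTβb : T ^ β ≤ b := by
    calc T ^ β ≤ (b ^ (1/β)) ^ β := Real.rpow_le_rpow hT0.le hTle hβ0.le
      _ = b := by
        rw [← Real.rpow_mul hb0.le, one_div_mul_cancel hβne, Real.rpow_one]
  -- from the equation: μ * (T * (b - T^β)) ≥ T^β + σ - b ≥ T^β > 0
  have hkey0 : μ * (T * (b - T ^ β)) = T ^ β + σ - b := by nlinarith [heq]
  have hP0 : 0 ≤ T * (b - T ^ β) := by nlinarith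
  have hμpos : 0 < μ := by
    by_contra h
    push_neg at h
    nlinarith
  have hμc := aux_key b β hb0 hβ0 hβ1 T hT0 hTβb
  have : μ * (T * (b - T ^ β)) ≤ ((1/b) * ((1-β)/(1+β)) ^ (β-1)) ^ (1/β) * (T * (b - T ^ β)) :=
    mul_le_mul_of_nonneg_right hμ hP0
  nlinarith
end

section
/- Let β, b ∈ (0,1) and μ_c < μ ≤ μ_bif, where μ_c := ((1/b)·((1−β)/(1+β))^{β−1})^{1/β} and μ_bif := 1/(β·(b(1−β)^{1−β})^{1/β}). Let 0 < T_L < T_R < b^{1/β} be the two zeros of h_μ', and set H_L := h_μ(T_L) and H_R := h_μ(T_R); then H_R < H_L, and for h_0 ∈ ℝ the number of solutions of h_μ(T) = h_0 in [0, b^{1/β}] is: exactly two if h_0 = H_R; exactly three if H_R < h_0 < H_L; exactly two if h_0 = H_L; and exactly one if 0 ≤ h_0 < H_R or H_L < h_0 ≤ b. -/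
open Real Set

lemma stmt11_key (b β T : ℝ) (hb : 0 < b) (hβ0 : 0 < β) (hβ1 : β < 1)
    (hT : 0 < T) (hTb : T ≤ b ^ (1/β)) :
    T * (b - T ^ β) ≤ β * (b * (1-β) ^ (1-β)) ^ (1/β) * T ^ β := by
  have h1β : (0:ℝ) < 1 - β := by linarith
  set x := T ^ β with hxdef
  have hx0 : 0 < x := Real.rpow_pos_of_pos hT β
  have hxb : x ≤ b := by
    calc x ≤ (b ^ (1/β)) ^ β := Real.rpow_le_rpow hT.le hTb hβ0.le
    _ = b := by
        rw [← Real.rpow_mul hb.le, one_div_mul_cancel hβ0.ne', Real.rpow_one]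
  have hbx : (0:ℝ) ≤ b - x := by linarith
  have amgm := Real.geom_mean_le_arith_mean2_weighted h1β.le hβ0.le
      (div_pos hx0 h1β).le (div_nonneg hbx hβ0.le) (by ring)
  have hRHS : (1-β)*(x/(1-β)) + β*((b-x)/β) = b := by field_simp; ring
  rw [hRHS, Real.div_rpow hx0.le h1β.le, Real.div_rpow hbx hβ0.le,
    div_mul_div_comm] at amgm
  have hprod : x^(1-β) * (b-x)^β ≤ b*((1-β)^(1-β)*β^β) :=
    (div_le_iff₀ (by positivity)).mp amgm
  have hpow : (x^(1-β)*(b-x)^β)^(1/β) ≤ (b*((1-β)^(1-β)*β^β))^(1/β) :=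
    Real.rpow_le_rpow (by positivity) hprod (by positivity)
  have hL : (x^(1-β)*(b-x)^β)^(1/β) = x^((1-β)*(1/β)) * (b-x) := by
    rw [Real.mul_rpow (by positivity) (by positivity),
      ← Real.rpow_mul hx0.le, ← Real.rpow_mul hbx,
      mul_one_div_cancel hβ0.ne', Real.rpow_one]
  have hR : (b*((1-β)^(1-β)*β^β))^(1/β)
      = (b*(1-β)^(1-β))^(1/β) * β := by
    rw [← mul_assoc, Real.mul_rpow (by positivity) (by positivity),
      ← Real.rpow_mul hβ0.le, mul_one_div_cancel hβ0.ne', Real.rpow_one]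
  rw [hL, hR] at hpow
  have hmul := mul_le_mul_of_nonneg_left hpow hx0.le
  have hxx : x * x^((1-β)*(1/β)) = T := by
    have h1 : x * x^((1-β)*(1/β)) = x^(1/β) := by
      rw [show x * x^((1-β)*(1/β)) = x^(1+(1-β)*(1/β)) by
          rw [Real.rpow_add hx0, Real.rpow_one]]
      congr 1; field_simp; ring
    rw [h1, hxdef, ← Real.rpow_mul hT.le, mul_one_div_cancel hβ0.ne', Real.rpow_one]
  calc T * (b - x) = x * (x^((1-β)*(1/β)) * (b-x)) := by
        rw [← mul_assoc, mul_comm x, ← hxx]; ring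
    _ ≤ x * ((b*(1-β)^(1-β))^(1/β) * β) := hmul
    _ = β * (b*(1-β)^(1-β))^(1/β) * x := by ring

set_option maxHeartbeats 1000000 in
/-- For `β, b ∈ (0,1)` and `μ_c < μ ≤ μ_bif`, let
`0 < T_L < T_R < b^{1/β}` be the two zeros of `h_μ'` and set `H_L = h_μ(T_L)`,
`H_R = h_μ(T_R)`. Then `H_R < H_L`, and the number of solutions of
`h_μ(T) = h₀` in `[0, b^{1/β}]` is: exactly two if `h₀ = H_R`; exactly three if
`H_R < h₀ < H_L`; exactly two if `h₀ = H_L`; exactly one if `0 ≤ h₀ < H_R` or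
`H_L < h₀ ≤ b`. -/
theorem stmt_11 (b β μ μc μbif TL TR : ℝ)
    (hb : b ∈ Set.Ioo (0:ℝ) 1) (hβ : β ∈ Set.Ioo (0:ℝ) 1)
    (hμc : μc = ((1/b) * ((1-β)/(1+β)) ^ (β-1)) ^ (1/β))
    (hμbif : μbif = 1/(β * (b*(1-β) ^ (1-β)) ^ (1/β)))
    (hμ1 : μc < μ) (hμ2 : μ ≤ μbif)
    (h : ℝ → ℝ) (hdef : ∀ T : ℝ, h T = μ*(T ^ β - b)*T + T ^ β)
    (hTL : 0 < TL) (hTLR : TL < TR) (hTRb : TR < b ^ (1/β))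
    (hgL : TL ^ (β-1) * (β + μ*(1+β)*TL) - μ*b = 0)
    (hgR : TR ^ (β-1) * (β + μ*(1+β)*TR) - μ*b = 0)
    (huniq : ∀ T > (0:ℝ), T ^ (β-1) * (β + μ*(1+β)*T) - μ*b = 0 → T = TL ∨ T = TR) :
    h TR < h TL ∧
    ∀ h₀ : ℝ,
      (h₀ = h TR →
        {T : ℝ | T ∈ Set.Icc (0:ℝ) (b ^ (1/β)) ∧ h T = h₀}.encard = 2) ∧
      (h TR < h₀ → h₀ < h TL →
        {T : ℝ | T ∈ Set.Icc (0:ℝ) (b ^ (1/β)) ∧ h T = h₀}.encard = 3) ∧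
      (h₀ = h TL →
        {T : ℝ | T ∈ Set.Icc (0:ℝ) (b ^ (1/β)) ∧ h T = h₀}.encard = 2) ∧
      ((0 ≤ h₀ ∧ h₀ < h TR) ∨ (h TL < h₀ ∧ h₀ ≤ b) →
        {T : ℝ | T ∈ Set.Icc (0:ℝ) (b ^ (1/β)) ∧ h T = h₀}.encard = 1) := by
  obtain ⟨hb0, hb1⟩ := hb
  obtain ⟨hβ0, hβ1⟩ := hβ
  have h1β : (0:ℝ) < 1 - β := by linarith
  have h1β' : (0:ℝ) < 1 + β := by linarith
  have hμpos : 0 < μ := by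
    have : 0 < μc := by
      rw [hμc]
      exact Real.rpow_pos_of_pos (by positivity) _
    linarith
  set B := b ^ (1/β) with hBdef
  have hB0 : 0 < B := Real.rpow_pos_of_pos hb0 _
  have hBβ : B ^ β = b := by
    rw [hBdef, ← Real.rpow_mul hb0.le, one_div_mul_cancel hβ0.ne', Real.rpow_one]
  have hTR : 0 < TR := hTL.trans hTLR
  have hTLB : TL < B := hTLR.trans hTRb
  -- values at endpoints
  have hh0 : h 0 = 0 := by
    rw [hdef, Real.zero_rpow hβ0.ne']; ring
  have hhB : h B = b := by rw [hdef, hBβ]; ring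
  -- continuity
  have hrc : Continuous fun T : ℝ => T ^ β :=
    continuous_iff_continuousAt.mpr fun x =>
      Real.continuousAt_rpow_const x β (Or.inr hβ0.le)
  have hfun : h = fun T => μ*(T ^ β - b)*T + T ^ β := funext hdef
  have hcont : Continuous h := by
    rw [hfun]
    exact ((continuous_const.mul (hrc.sub continuous_const)).mul continuous_id).add hrc
  -- the derivative function G
  set G : ℝ → ℝ := fun T => β*T^(β-1) + μ*(1+β)*T^β - μ*b with hGdef
  have hGeq : ∀ T : ℝ, 0 < T → G T = T ^ (β-1) * (β + μ*(1+β)*T) - μ*b := by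
    intro T hT
    have hTβ : T ^ (β-1) * T = T ^ β := by
      rw [← Real.rpow_add_one hT.ne']; norm_num
    simp only [hGdef]
    linear_combination (-(μ*(1+β))) * hTβ
  have hGL : G TL = 0 := by rw [hGeq TL hTL, hgL]
  have hGR : G TR = 0 := by rw [hGeq TR hTR, hgR]
  -- h has derivative G T at every T > 0
  have hderiv : ∀ T : ℝ, 0 < T → HasDerivAt h (G T) T := by
    intro T hT
    have hr : HasDerivAt (fun T : ℝ => T ^ β) (β * T ^ (β-1)) T :=
      Real.hasDerivAt_rpow_const (Or.inl hT.ne')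
    have d1 : HasDerivAt (fun T : ℝ => μ*(T ^ β - b)) (μ*(β * T ^ (β-1))) T :=
      (hr.sub_const b).const_mul μ
    have d2 : HasDerivAt (fun T : ℝ => μ*(T ^ β - b)*T)
        (μ*(β * T ^ (β-1))*T + μ*(T ^ β - b)*1) T := d1.mul (hasDerivAt_id T)
    have d3 := d2.add hr
    rw [hfun]
    have hTβ : T ^ (β-1) * T = T ^ β := by
      rw [← Real.rpow_add_one hT.ne']; norm_num
    refine d3.congr_deriv ?_
    show _ = (β*T^(β-1) + μ*(1+β)*T^β - μ*b)
    linear_combination (μ*β) * hTβ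
  -- G is unimodal
  set Ts : ℝ := (1-β)/(μ*(1+β)) with hTs
  have hTs0 : 0 < Ts := div_pos h1β (by positivity)
  have hGderiv : ∀ T : ℝ, 0 < T →
      HasDerivAt G (β*((β-1) * T ^ (β-1-1)) + μ*(1+β)*(β * T ^ (β-1))) T := by
    intro T hT
    have hr1 : HasDerivAt (fun T : ℝ => T ^ (β-1)) ((β-1) * T ^ (β-1-1)) T :=
      Real.hasDerivAt_rpow_const (Or.inl hT.ne')
    have hr2 : HasDerivAt (fun T : ℝ => T ^ β) (β * T ^ (β-1)) T :=
      Real.hasDerivAt_rpow_const (Or.inl hT.ne')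
    exact ((hr1.const_mul β).add (hr2.const_mul (μ*(1+β)))).sub_const (μ*b)
  have hGsign : ∀ T : ℝ, 0 < T →
      β*((β-1) * T ^ (β-1-1)) + μ*(1+β)*(β * T ^ (β-1))
        = β * (T ^ (β-1) / T) * ((β-1) + μ*(1+β)*T) := by
    intro T hT
    have hT1 : T ^ (β-1-1) = T ^ (β-1) / T := by
      rw [eq_div_iff hT.ne', ← Real.rpow_add_one hT.ne']; norm_num
    rw [hT1]; field_simp
  have hGanti : StrictAntiOn G (Ioc 0 Ts) := by
    apply strictAntiOn_of_deriv_neg (convex_Ioc 0 Ts)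
    · exact fun T hT => ((hGderiv T hT.1).continuousAt).continuousWithinAt
    · intro T hT
      rw [interior_Ioc] at hT
      rw [(hGderiv T hT.1).deriv, hGsign T hT.1]
      have hp : 0 < T ^ (β-1) := Real.rpow_pos_of_pos hT.1 _
      have hT0 : 0 < T := hT.1
      have hlt : μ*(1+β)*T < 1 - β := by
        have := hT.2
        rw [hTs, lt_div_iff₀ (by positivity)] at this
        linarith
      apply mul_neg_of_pos_of_neg (mul_pos hβ0 (div_pos hp hT0))
      linarith
  have hGmono : StrictMonoOn G (Ici Ts) := by
    apply strictMonoOn_of_deriv_pos (convex_Ici Ts)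
    · exact fun T hT => ((hGderiv T (hTs0.trans_le hT)).continuousAt).continuousWithinAt
    · intro T hT
      rw [interior_Ici] at hT
      have hT0 : 0 < T := hTs0.trans hT
      rw [(hGderiv T hT0).deriv, hGsign T hT0]
      have hp : 0 < T ^ (β-1) := Real.rpow_pos_of_pos hT0 _
      have hlt : 1 - β < μ*(1+β)*T := by
        have hT' : Ts < T := hT
        rw [hTs, div_lt_iff₀ (by positivity)] at hT'
        linarith
      apply mul_pos (mul_pos hβ0 (div_pos hp hT0))
      linarith
  -- TL < Ts < TR
  have hTLTs : TL < Ts := by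
    by_contra hc
    push_neg at hc
    have := hGmono hc (hc.trans hTLR.le) hTLR
    rw [hGL, hGR] at this
    exact lt_irrefl 0 this
  have hTsTR : Ts < TR := by
    by_contra hc
    push_neg at hc
    have := hGanti ⟨hTL, hTLR.le.trans hc⟩ ⟨hTR, hc⟩ hTLR
    rw [hGL, hGR] at this
    exact lt_irrefl 0 this
  -- sign of G
  have hGpos1 : ∀ T : ℝ, 0 < T → T < TL → 0 < G T := by
    intro T h0 hlt
    have := hGanti ⟨h0, hlt.le.trans hTLTs.le⟩ ⟨hTL, hTLTs.le⟩ hlt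
    rwa [hGL] at this
  have hGneg : ∀ T : ℝ, TL < T → T < TR → G T < 0 := by
    intro T h1 h2
    rcases le_or_gt T Ts with hc | hc
    · have := hGanti ⟨hTL, hTLTs.le⟩ ⟨hTL.trans h1, hc⟩ h1
      rwa [hGL] at this
    · have := hGmono hc.le hTsTR.le h2
      rwa [hGR] at this
  have hGpos2 : ∀ T : ℝ, TR < T → 0 < G T := by
    intro T hlt
    have := hGmono hTsTR.le (hTsTR.le.trans hlt.le) hlt
    rwa [hGR] at this
  -- monotonicity of h on the three intervals
  have hm1 : StrictMonoOn h (Icc 0 TL) := by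
    apply strictMonoOn_of_deriv_pos (convex_Icc 0 TL) hcont.continuousOn
    intro x hx
    rw [interior_Icc] at hx
    rw [(hderiv x hx.1).deriv]
    exact hGpos1 x hx.1 hx.2
  have ha1 : StrictAntiOn h (Icc TL TR) := by
    apply strictAntiOn_of_deriv_neg (convex_Icc TL TR) hcont.continuousOn
    intro x hx
    rw [interior_Icc] at hx
    rw [(hderiv x (hTL.trans hx.1)).deriv]
    exact hGneg x hx.1 hx.2
  have hm2 : StrictMonoOn h (Icc TR B) := by
    apply strictMonoOn_of_deriv_pos (convex_Icc TR B) hcont.continuousOn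
    intro x hx
    rw [interior_Icc] at hx
    rw [(hderiv x (hTR.trans hx.1)).deriv]
    exact hGpos2 x hx.1
  -- h TR ≥ 0
  have hTRβ : TR ^ β < b := by
    have := Real.rpow_lt_rpow hTR.le hTRb hβ0
    rwa [hBβ] at this
  have hHR0 : 0 ≤ h TR := by
    have hkey := stmt11_key b β TR hb0 hβ0 hβ1 hTR hTRb.le
    have hCpos : (0:ℝ) < β * (b*(1-β)^(1-β))^(1/β) := by positivity
    have hμbif0 : 0 < μbif := by rw [hμbif]; positivity
    have hμbifC : μbif * (β * (b*(1-β)^(1-β))^(1/β)) = 1 := by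
      rw [hμbif]; field_simp
    have hTRnn : 0 ≤ TR * (b - TR ^ β) := by nlinarith
    have h1 : μ * (TR*(b - TR^β)) ≤ μbif * (TR*(b - TR^β)) :=
      mul_le_mul_of_nonneg_right hμ2 hTRnn
    have h2 : μbif * (TR*(b-TR^β)) ≤ μbif * (β * (b*(1-β)^(1-β))^(1/β) * TR^β) :=
      mul_le_mul_of_nonneg_left hkey hμbif0.le
    have h3 : μbif * (β * (b*(1-β)^(1-β))^(1/β) * TR^β) = TR^β := by
      rw [← mul_assoc, hμbifC, one_mul]
    rw [hdef]
    nlinarith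
  -- h TR < h TL
  have hHRL : h TR < h TL :=
    ha1 (left_mem_Icc.mpr hTLR.le) (right_mem_Icc.mpr hTLR.le) hTLR
  -- h TL < b
  have hTLβ : TL ^ β < b := by
    have := Real.rpow_lt_rpow hTL.le hTLB hβ0
    rwa [hBβ] at this
  have hHLb : h TL < b := by
    rw [hdef]
    nlinarith [mul_pos (mul_pos hμpos hTL) (sub_pos.mpr hTLβ)]
  -- IVT helpers
  have ivt1 : ∀ y : ℝ, 0 ≤ y → y ≤ h TL → ∃ a, a ∈ Icc 0 TL ∧ h a = y := by
    intro y h1 h2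
    have := intermediate_value_Icc hTL.le hcont.continuousOn
      (show y ∈ Icc (h 0) (h TL) by rw [hh0]; exact ⟨h1, h2⟩)
    obtain ⟨a, ha, hay⟩ := this
    exact ⟨a, ha, hay⟩
  have ivt2 : ∀ y : ℝ, h TR ≤ y → y ≤ h TL → ∃ a, a ∈ Icc TL TR ∧ h a = y := by
    intro y h1 h2
    obtain ⟨a, ha, hay⟩ := intermediate_value_Icc' hTLR.le hcont.continuousOn
      (show y ∈ Icc (h TR) (h TL) from ⟨h1, h2⟩)
    exact ⟨a, ha, hay⟩
  have ivt3 : ∀ y : ℝ, h TR ≤ y → y ≤ b → ∃ a, a ∈ Icc TR B ∧ h a = y := by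
    intro y h1 h2
    obtain ⟨a, ha, hay⟩ := intermediate_value_Icc hTRb.le hcont.continuousOn
      (show y ∈ Icc (h TR) (h B) by rw [hhB]; exact ⟨h1, h2⟩)
    exact ⟨a, ha, hay⟩
  refine ⟨hHRL, fun h₀ => ⟨?_, ?_, ?_, ?_⟩⟩
  -- case h₀ = h TR : two solutions
  · rintro rfl
    obtain ⟨a, ha, hay⟩ := ivt1 (h TR) hHR0 hHRL.le
    have haTR : a < TR := lt_of_le_of_lt ha.2 hTLR
    have hset : {T : ℝ | T ∈ Icc (0:ℝ) B ∧ h T = h TR} = {a, TR} := by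
      ext T
      simp only [mem_setOf_eq, mem_insert_iff, mem_singleton_iff]
      constructor
      · rintro ⟨⟨hT0, hTB⟩, hhT⟩
        rcases le_or_gt T TL with c1 | c1
        · left; exact hm1.injOn ⟨hT0, c1⟩ ha (by rw [hhT, hay])
        · rcases le_or_gt T TR with c2 | c2
          · right; exact ha1.injOn ⟨c1.le, c2⟩ (right_mem_Icc.mpr hTLR.le) hhT
          · right; exact hm2.injOn ⟨c2.le, hTB⟩ (left_mem_Icc.mpr hTRb.le) hhT
      · rintro (rfl | rfl)
        · exact ⟨⟨ha.1, ha.2.trans hTLB.le⟩, hay⟩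
        · exact ⟨⟨hTR.le, hTRb.le⟩, rfl⟩
    rw [hset]
    exact Set.encard_pair (ne_of_lt haTR)
  -- case h TR < h₀ < h TL : three solutions
  · intro hlo hhi
    obtain ⟨a₁, ha₁, hy₁⟩ := ivt1 h₀ (hHR0.trans hlo.le) hhi.le
    obtain ⟨a₂, ha₂, hy₂⟩ := ivt2 h₀ hlo.le hhi.le
    obtain ⟨a₃, ha₃, hy₃⟩ := ivt3 h₀ hlo.le (hhi.le.trans hHLb.le)
    have ha₁TL : a₁ < TL :=
      lt_of_le_of_ne ha₁.2 (fun e => (ne_of_lt hhi) (by rw [← e, hy₁]))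
    have hTLa₂ : TL < a₂ :=
      lt_of_le_of_ne ha₂.1 (fun e => (ne_of_lt hhi) (by rw [e, hy₂]))
    have ha₂TR : a₂ < TR :=
      lt_of_le_of_ne ha₂.2 (fun e => (ne_of_lt hlo) (by rw [← e, hy₂]))
    have hTRa₃ : TR < a₃ :=
      lt_of_le_of_ne ha₃.1 (fun e => (ne_of_lt hlo) (by rw [e, hy₃]))
    have h12 : a₁ < a₂ := ha₁TL.trans hTLa₂
    have h23 : a₂ < a₃ := ha₂TR.trans hTRa₃
    have hset : {T : ℝ | T ∈ Icc (0:ℝ) B ∧ h T = h₀} = {a₁, a₂, a₃} := by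
      ext T
      simp only [mem_setOf_eq, mem_insert_iff, mem_singleton_iff]
      constructor
      · rintro ⟨⟨hT0, hTB⟩, hhT⟩
        rcases le_or_gt T TL with c1 | c1
        · left; exact hm1.injOn ⟨hT0, c1⟩ ha₁ (by rw [hhT, hy₁])
        · rcases le_or_gt T TR with c2 | c2
          · right; left; exact ha1.injOn ⟨c1.le, c2⟩ ha₂ (by rw [hhT, hy₂])
          · right; right; exact hm2.injOn ⟨c2.le, hTB⟩ ha₃ (by rw [hhT, hy₃])
      · rintro (rfl | rfl | rfl)
        · exact ⟨⟨ha₁.1, ha₁.2.trans hTLB.le⟩, hy₁⟩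
        · exact ⟨⟨hTL.le.trans ha₂.1, ha₂.2.trans hTRb.le⟩, hy₂⟩
        · exact ⟨⟨hTR.le.trans ha₃.1, ha₃.2⟩, hy₃⟩
    rw [hset]
    exact Set.encard_eq_three.mpr
      ⟨a₁, a₂, a₃, ne_of_lt h12, ne_of_lt (h12.trans h23), ne_of_lt h23, rfl⟩
  -- case h₀ = h TL : two solutions
  · rintro rfl
    obtain ⟨a₃, ha₃, hy₃⟩ := ivt3 (h TL) hHRL.le hHLb.le
    have hTRa₃ : TR < a₃ :=
      lt_of_le_of_ne ha₃.1 (fun e => (ne_of_lt hHRL) (by rw [e, hy₃]))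
    have hset : {T : ℝ | T ∈ Icc (0:ℝ) B ∧ h T = h TL} = {TL, a₃} := by
      ext T
      simp only [mem_setOf_eq, mem_insert_iff, mem_singleton_iff]
      constructor
      · rintro ⟨⟨hT0, hTB⟩, hhT⟩
        rcases le_or_gt T TL with c1 | c1
        · left; exact hm1.injOn ⟨hT0, c1⟩ (right_mem_Icc.mpr hTL.le) hhT
        · rcases le_or_gt T TR with c2 | c2
          · left; exact ha1.injOn ⟨c1.le, c2⟩ (left_mem_Icc.mpr hTLR.le) hhT
          · right; exact hm2.injOn ⟨c2.le, hTB⟩ ha₃ (by rw [hhT, hy₃])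
      · rintro (rfl | rfl)
        · exact ⟨⟨hTL.le, hTLB.le⟩, rfl⟩
        · exact ⟨⟨hTR.le.trans ha₃.1, ha₃.2⟩, hy₃⟩
    rw [hset]
    exact Set.encard_pair (ne_of_lt (hTLR.trans hTRa₃))
  -- case one solution
  · rintro (⟨h1, h2⟩ | ⟨h1, h2⟩)
    · obtain ⟨a₁, ha₁, hy₁⟩ := ivt1 h₀ h1 (h2.le.trans hHRL.le)
      have hset : {T : ℝ | T ∈ Icc (0:ℝ) B ∧ h T = h₀} = {a₁} := by
        ext T
        simp only [mem_setOf_eq, mem_singleton_iff]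
        constructor
        · rintro ⟨⟨hT0, hTB⟩, hhT⟩
          rcases le_or_gt T TL with c1 | c1
          · exact hm1.injOn ⟨hT0, c1⟩ ha₁ (by rw [hhT, hy₁])
          · exfalso
            rcases le_or_gt T TR with c2 | c2
            · have : h TR ≤ h T := ha1.antitoneOn ⟨c1.le, c2⟩
                (right_mem_Icc.mpr hTLR.le) c2
              linarith [hhT ▸ this]
            · have : h TR < h T := hm2 (left_mem_Icc.mpr hTRb.le) ⟨c2.le, hTB⟩ c2
              linarith [hhT ▸ this]
        · rintro rfl
          exact ⟨⟨ha₁.1, ha₁.2.trans hTLB.le⟩, hy₁⟩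
      rw [hset]
      exact Set.encard_singleton a₁
    · obtain ⟨a₃, ha₃, hy₃⟩ := ivt3 h₀ (hHRL.le.trans h1.le) h2
      have hset : {T : ℝ | T ∈ Icc (0:ℝ) B ∧ h T = h₀} = {a₃} := by
        ext T
        simp only [mem_setOf_eq, mem_singleton_iff]
        constructor
        · rintro ⟨⟨hT0, hTB⟩, hhT⟩
          rcases le_or_gt T TR with c2 | c2
          · exfalso
            rcases le_or_gt T TL with c1 | c1
            · have : h T ≤ h TL := hm1.monotoneOn ⟨hT0, c1⟩
                (right_mem_Icc.mpr hTL.le) c1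
              linarith [hhT ▸ this]
            · have : h T ≤ h TL := ha1.antitoneOn (left_mem_Icc.mpr hTLR.le)
                ⟨c1.le, c2⟩ c1.le
              linarith [hhT ▸ this]
          · exact hm2.injOn ⟨c2.le, hTB⟩ ha₃ (by rw [hhT, hy₃])
        · rintro rfl
          exact ⟨⟨hTR.le.trans ha₃.1, ha₃.2⟩, hy₃⟩
      rw [hset]
      exact Set.encard_singleton a₃
end
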